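/- arXiv:2302.05090 — 16 statements merged into one kernel-verified Lean document; each statement's English description precedes it below -/
import Mathlib

section
/- Let Γ ∈ ℝ^{n×ν} and V ∈ ℝ^{ν×n} be real matrices and let r = rank Γ. Let T ∈ ℝ^{n×n} be an invertible matrix such that each of the last n−r rows of T is a left null vector of Γ (i.e., the last n−r rows of TΓ are zero). Write TΓVT^{-1} in block form with top-left r×r block Λ_r. Then Λ_r is invertible if and only if the sum of all r×r principal minors of ΓV is nonzero. -/
open Matrix Finset

/-- The principal minor of a square matrix `M` indexed by the set `I`. -/
noncomputable def principalMinor {n : ℕ} (M : Matrix (Fin n) (Fin n) ℝ) (I : Finset (Fin n)) : ℝ :=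
  (M.submatrix (fun i : {x // x ∈ I} => (i : Fin n)) (fun i : {x // x ∈ I} => (i : Fin n))).det

/-- The sum of all `r × r` principal minors of the square matrix `M`. -/
noncomputable def sumMinors {n : ℕ} (r : ℕ) (M : Matrix (Fin n) (Fin n) ℝ) : ℝ :=
  ∑ I ∈ Finset.univ.powersetCard r, principalMinor M I

/-!
Up to sign, the sum of the `r × r` principal minors of a matrix is a coefficient of its
characteristic polynomial, so it is unchanged by the similarity `M ↦ T M T⁻¹`. In
`T (Γ V) T⁻¹ = (T Γ) (V T⁻¹)` every row from the `r`-th on vanishes, so every `r × r` principal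
minor except the top-left one has a zero row; hence the sum of the `r × r` principal minors of
`Γ V` equals `det Λ_r`.
-/

theorem sumMinors_eq_charpoly_coeff {n r : ℕ} (M : Matrix (Fin n) (Fin n) ℝ) (hr : r ≤ n) :
    sumMinors r M = (-1) ^ r * M.charpoly.coeff (n - r) := by
  have h := M.charpoly_coeff_eq_sum_minors r (by simpa using hr)
  rw [Fintype.card_fin] at h
  rw [h, ← mul_assoc, ← mul_pow, neg_one_mul, neg_neg, one_pow, one_mul]
  rfl

theorem sumMinors_conj {n : ℕ} (r : ℕ) (M T : Matrix (Fin n) (Fin n) ℝ) (hT : IsUnit T.det) :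
    sumMinors r (T * M * T⁻¹) = sumMinors r M := by
  rcases le_or_gt r n with hr | hr
  · have hchar : (T * M * T⁻¹).charpoly = M.charpoly := by
      rw [charpoly_mul_comm, nonsing_inv_mul_cancel_left _ _ hT]
    rw [sumMinors_eq_charpoly_coeff _ hr, sumMinors_eq_charpoly_coeff _ hr, hchar]
  · have hempty : (univ : Finset (Fin n)).powersetCard r = ∅ := by simpa using hr
    simp only [sumMinors, hempty, sum_empty]

theorem principalMinor_univ_map {n r : ℕ} (M : Matrix (Fin n) (Fin n) ℝ) (f : Fin r ↪ Fin n) :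
    principalMinor M (univ.map f) = (M.submatrix f f).det := by
  let e : Fin r ≃ univ.map f := (Equiv.subtypeUnivEquiv mem_univ).symm.trans (univ.equivMap f)
  rw [principalMinor, ← det_submatrix_equiv_self e]
  rfl

theorem sumMinors_eq_principalMinor_of_row_eq_zero {n r : ℕ} (M : Matrix (Fin n) (Fin n) ℝ)
    {s : Finset (Fin n)} (hs : s.card = r) (hM : ∀ i ∉ s, ∀ j, M i j = 0) :
    sumMinors r M = principalMinor M s := by
  refine sum_eq_single_of_mem s (mem_powersetCard_univ.mpr hs) fun I hI hIs => ?_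
  obtain ⟨i, hiI, his⟩ : ∃ i ∈ I, i ∉ s := by
    by_contra! hsub
    exact hIs (eq_of_subset_of_card_le hsub (by rw [hs, (mem_powersetCard_univ.mp hI)]))
  exact det_eq_zero_of_row_eq_zero ⟨i, hiI⟩ fun j => hM i his j

theorem reduced_jacobian_nonsingular_iff_general (n ν : ℕ)
    (Γ : Matrix (Fin n) (Fin ν) ℝ) (V : Matrix (Fin ν) (Fin n) ℝ)
    (r : ℕ) (hrn : r ≤ n)
    (T : Matrix (Fin n) (Fin n) ℝ) (hT : IsUnit T.det)
    (hTnull : ∀ i : Fin n, r ≤ (i : ℕ) → ∀ j : Fin ν, (T * Γ) i j = 0) :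
    (Matrix.of fun a b : Fin r =>
        (T * (Γ * V) * T⁻¹) (Fin.castLE hrn a) (Fin.castLE hrn b)).det ≠ 0 ↔
      sumMinors r (Γ * V) ≠ 0 := by
  set s := univ.map (Fin.castLEEmb hrn)
  have hs : s.card = r := by simp [s]
  have hrows : ∀ i ∉ s, ∀ j, (T * (Γ * V) * T⁻¹) i j = 0 := by
    intro i hi j
    have hir : r ≤ (i : ℕ) := by
      by_contra! h
      exact hi (mem_map.mpr ⟨⟨i, h⟩, mem_univ _, rfl⟩)
    rw [← Matrix.mul_assoc T Γ V, Matrix.mul_assoc (T * Γ), mul_apply]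
    exact sum_eq_zero fun k _ => by rw [hTnull i hir k, zero_mul]
  have hblock : (Matrix.of fun a b : Fin r =>
      (T * (Γ * V) * T⁻¹) (Fin.castLE hrn a) (Fin.castLE hrn b)).det = sumMinors r (Γ * V) := by
    rw [← sumMinors_conj r (Γ * V) T hT,
      sumMinors_eq_principalMinor_of_row_eq_zero _ hs hrows, principalMinor_univ_map]
    rfl
  rw [hblock]

/-- The reduced Jacobian (the top-left `r × r` block of `T (Γ V) T⁻¹`, where the
last `n - r` rows of `T` are left null vectors of `Γ`) is invertible iff the sum
of all `r × r` principal minors of `Γ V` is nonzero. -/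
theorem reduced_jacobian_nonsingular_iff (n ν : ℕ)
    (Γ : Matrix (Fin n) (Fin ν) ℝ) (V : Matrix (Fin ν) (Fin n) ℝ)
    (r : ℕ) (hr : r = Γ.rank) (hrn : r ≤ n)
    (T : Matrix (Fin n) (Fin n) ℝ) (hT : IsUnit T.det)
    (hTnull : ∀ i : Fin n, r ≤ (i : ℕ) → ∀ j : Fin ν, (T * Γ) i j = 0) :
    (Matrix.of fun a b : Fin r =>
        (T * (Γ * V) * T⁻¹) (Fin.castLE hrn a) (Fin.castLE hrn b)).det ≠ 0 ↔
      sumMinors r (Γ * V) ≠ 0 :=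
  reduced_jacobian_nonsingular_iff_general n ν Γ V r hrn T hT hTnull
end

section
/- Let a reaction network be given by α, β ∈ ℕ^{n×ν} with Γ = β − α and r = rank Γ, and let 𝒦 be its admissible Jacobian set. Assume the network is robustly P0 and robustly non-degenerate. Then for every I ⊆ {1,…,n} and J ⊆ {1,…,ν} with |I| = |J| = r, and for every V ∈ 𝒦, det(−Γ_{IJ})·det(V_{JI}) ≥ 0. -/
open Matrix Finset

/-- The determinant of the `r × r` submatrix of `M` with rows indexed by `I`
    and columns indexed by `J` (defined when `|I| = |J| = r`, else `0`). -/
noncomputable def subdet {n ν : ℕ} (r : ℕ) (M : Matrix (Fin n) (Fin ν) ℝ)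
    (I : Finset (Fin n)) (J : Finset (Fin ν)) : ℝ :=
  if h : I.card = r ∧ J.card = r then
    (Matrix.of fun a b : Fin r => M (I.orderIsoOfFin h.1 a).1 (J.orderIsoOfFin h.2 b).1).det
  else 0

/-- The admissible Jacobian set: `V j i > 0` whenever `X i` is a reactant of reaction `j`
    (i.e. `α i j > 0`) and `V j i = 0` otherwise. -/
def admissible {n ν : ℕ} (α : Matrix (Fin n) (Fin ν) ℕ) (V : Matrix (Fin ν) (Fin n) ℝ) : Prop :=
  ∀ i j, (0 < α i j → 0 < V j i) ∧ (α i j = 0 → V j i = 0)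

/-- The stoichiometry matrix `Γ = β - α` (entries cast to `ℝ`). -/
def gam {n ν : ℕ} (α β : Matrix (Fin n) (Fin ν) ℕ) : Matrix (Fin n) (Fin ν) ℝ :=
  fun i j => (β i j : ℝ) - (α i j : ℝ)

/-!
For `s > 0`, multiplying the rows of `V` outside `J` by `s` keeps `V` admissible, so the
`I`-minor of `-Γ V_s` is nonnegative. This minor is continuous in `s`, and at `s = 0` the rows
outside `J` vanish, so it collapses to the single Cauchy–Binet term `det(-Γ_{IJ}) det(V_{JI})`.
-/

theorem Matrix.submatrix_mul_of_forall_row_eq_zero {l m n o p κ R : Type*} [Fintype n]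
    [Fintype κ] [NonUnitalNonAssocSemiring R] (M : Matrix m n R) (N : Matrix n o R)
    (e₁ : l → m) (e₂ : p → o) {f : κ → n} (hf : Function.Injective f)
    (hN : ∀ k ∉ Set.range f, N k = 0) :
    (M * N).submatrix e₁ e₂ = M.submatrix e₁ f * N.submatrix f e₂ := by
  ext i j
  simp only [mul_apply, submatrix_apply]
  exact (Fintype.sum_of_injective f hf _ _ (fun k hk => by simp [hN k hk]) fun _ => rfl).symm

lemma principalMinor_eq_det_submatrix {n r : ℕ} (M : Matrix (Fin n) (Fin n) ℝ)
    {I : Finset (Fin n)} (hI : I.card = r) :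
    principalMinor M I = (M.submatrix (I.orderEmbOfFin hI) (I.orderEmbOfFin hI)).det :=
  (det_submatrix_equiv_self (I.orderIsoOfFin hI).toEquiv _).symm

lemma subdet_eq_det_submatrix {n ν r : ℕ} (M : Matrix (Fin n) (Fin ν) ℝ)
    {I : Finset (Fin n)} {J : Finset (Fin ν)} (hI : I.card = r) (hJ : J.card = r) :
    subdet r M I J = (M.submatrix (I.orderEmbOfFin hI) (J.orderEmbOfFin hJ)).det := by
  rw [subdet, dif_pos ⟨hI, hJ⟩]
  rfl

lemma principalMinor_neg_mul_eq_subdet_mul_subdet {n ν r : ℕ} (G : Matrix (Fin n) (Fin ν) ℝ)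
    {V W : Matrix (Fin ν) (Fin n) ℝ} {I : Finset (Fin n)} {J : Finset (Fin ν)}
    (hI : I.card = r) (hJ : J.card = r) (hW₀ : ∀ k ∉ J, W k = 0) (hWV : ∀ k ∈ J, W k = V k) :
    principalMinor (-(G * W)) I = subdet r (-G) I J * subdet r V J I := by
  have hWJ : W.submatrix (J.orderEmbOfFin hJ) (I.orderEmbOfFin hI)
      = V.submatrix (J.orderEmbOfFin hJ) (I.orderEmbOfFin hI) := by
    ext a b
    simp only [submatrix_apply, hWV _ (J.orderEmbOfFin_mem hJ a)]
  rw [principalMinor_eq_det_submatrix _ hI, subdet_eq_det_submatrix _ hI hJ,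
    subdet_eq_det_submatrix _ hJ hI, ← Matrix.neg_mul,
    submatrix_mul_of_forall_row_eq_zero _ _ _ _ (J.orderEmbOfFin hJ).injective
      (by simpa using hW₀), hWJ, det_mul]

lemma admissible_diagonal_mul {n ν : ℕ} {α : Matrix (Fin n) (Fin ν) ℕ}
    {V : Matrix (Fin ν) (Fin n) ℝ} (hV : admissible α V) {d : Fin ν → ℝ} (hd : ∀ j, 0 < d j) :
    admissible α (diagonal d * V) := fun i j => by
  simp only [diagonal_mul]
  exact ⟨fun h => mul_pos (hd j) ((hV i j).1 h), fun h => by rw [(hV i j).2 h, mul_zero]⟩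

lemma nonneg_of_continuous_of_forall_pos {f : ℝ → ℝ} (hf : Continuous f)
    (h : ∀ s, 0 < s → 0 ≤ f s) : 0 ≤ f 0 := by
  have : closure (Set.Ioi 0) ⊆ {s | 0 ≤ f s} :=
    (isClosed_le continuous_const hf).closure_subset_iff.mpr h
  exact this (closure_Ioi (0 : ℝ) ▸ Set.self_mem_Ici)

theorem terms_nonneg_general (n ν : ℕ) (α β : Matrix (Fin n) (Fin ν) ℕ) (r : ℕ)
    (hP0 : ∀ V, admissible α V → ∀ I : Finset (Fin n),
      0 ≤ principalMinor (-(gam α β * V)) I) :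
    ∀ (I : Finset (Fin n)) (J : Finset (Fin ν)), I.card = r → J.card = r →
      ∀ V, admissible α V →
        0 ≤ subdet r (-(gam α β)) I J * subdet r V J I := by
  intro I J hI hJ V hV
  let d : ℝ → Fin ν → ℝ := fun s k => if k ∈ J then 1 else s
  have hd : Continuous d :=
    continuous_pi fun k => continuous_if_const _ (fun _ => continuous_const) fun _ => continuous_id
  have hcont : Continuous fun s => principalMinor (-(gam α β * (diagonal (d s) * V))) I := by
    unfold principalMinor
    fun_prop
  have hpos : ∀ s, 0 < s → 0 ≤ principalMinor (-(gam α β * (diagonal (d s) * V))) I :=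
    fun s hs => hP0 _ (admissible_diagonal_mul hV fun k => by
      dsimp only [d]; split_ifs <;> positivity) I
  rw [← principalMinor_neg_mul_eq_subdet_mul_subdet _ hI hJ (W := diagonal (d 0) * V)
    (fun k hk => by ext i; simp [d, hk]) (fun k hk => by ext i; simp [d, hk])]
  exact nonneg_of_continuous_of_forall_pos hcont hpos

/-- For a robustly `P₀` and robustly non-degenerate network, every term
`det(-Γ_{IJ}) det(V_{JI})` with `|I| = |J| = r` is nonnegative for all admissible `V`. -/
theorem terms_nonneg (n ν : ℕ) (α β : Matrix (Fin n) (Fin ν) ℕ) (r : ℕ)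
    (hr : r = (gam α β).rank)
    (hP0 : ∀ V, admissible α V → ∀ I : Finset (Fin n),
      0 ≤ principalMinor (-(gam α β * V)) I)
    (hND : ∀ V, admissible α V → sumMinors r (-(gam α β * V)) ≠ 0) :
    ∀ (I : Finset (Fin n)) (J : Finset (Fin ν)), I.card = r → J.card = r →
      ∀ V, admissible α V →
        0 ≤ subdet r (-(gam α β)) I J * subdet r V J I :=
  terms_nonneg_general n ν α β r hP0
end

section
/- Let a reaction network be given by α, β ∈ ℕ^{n×ν} with Γ = β − α and r = rank Γ, and let 𝒦 be its admissible Jacobian set. Assume the network is robustly P0. If there exists V* ∈ 𝒦 such that the sum of all r×r principal minors of −ΓV* is strictly positive, then for every V ∈ 𝒦 the sum of all r×r principal minors of −ΓV is strictly positive. -/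
/-!
A single entry `V j i` only enters column `i` of `-Γ V`, so every principal minor, and hence
the sum of the `r × r` principal minors, is an affine function of that entry. Along one entry
the admissible values form either `{0}` or the open ray `(0, ∞)`; an affine function that is
nonnegative on the ray and vanishes at an interior point of it is constant. So if the sum
vanished at one admissible `V`, changing `V` into `V*` one entry at a time would keep it zero,
contradicting its positivity at `V*`.
-/

open Matrix Finset

theorem Matrix.det_add_smul_of_eq_zero_off_col {ι R : Type*} [Fintype ι] [DecidableEq ι]
    [CommRing R] (A B : Matrix ι ι R) (k : ι) (hB : ∀ a c, c ≠ k → B a c = 0) (t : R) :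
    (A + t • B).det = A.det + t * (A.updateCol k fun a => B a k).det := by
  have hcol : A + t • B = A.updateCol k ((fun a => A a k) + t • fun a => B a k) := by
    ext a c
    by_cases hc : c = k
    · subst hc; simp
    · simp [hc, hB a c hc]
  rw [hcol, det_updateCol_add, det_updateCol_smul, updateCol_eq_self]

theorem exists_principalMinor_add_smul_eq {n : ℕ} (M D : Matrix (Fin n) (Fin n) ℝ) (i : Fin n)
    (hD : ∀ a c, c ≠ i → D a c = 0) (I : Finset (Fin n)) :
    ∃ c : ℝ, ∀ t : ℝ, principalMinor (M + t • D) I = principalMinor M I + c * t := by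
  set e : I → Fin n := fun x => x
  have hsub : ∀ t : ℝ, (M + t • D).submatrix e e = M.submatrix e e + t • D.submatrix e e :=
    fun _ => rfl
  unfold principalMinor
  by_cases hi : i ∈ I
  · refine ⟨((M.submatrix e e).updateCol ⟨i, hi⟩ fun a => D (e a) i).det, fun t => ?_⟩
    rw [hsub, det_add_smul_of_eq_zero_off_col _ (D.submatrix e e) ⟨i, hi⟩
      (fun a c hc => hD _ _ fun h => hc (Subtype.ext h)), mul_comm]
    rfl
  · refine ⟨0, fun t => ?_⟩
    have hDI : D.submatrix e e = 0 := by
      ext a c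
      exact hD _ _ fun h => hi (h ▸ c.2)
    rw [hsub, hDI, smul_zero, add_zero, zero_mul, add_zero]

theorem exists_sumMinors_add_smul_eq {n : ℕ} (r : ℕ) (M D : Matrix (Fin n) (Fin n) ℝ)
    (i : Fin n) (hD : ∀ a c, c ≠ i → D a c = 0) :
    ∃ c : ℝ, ∀ t : ℝ, sumMinors r (M + t • D) = sumMinors r M + c * t := by
  choose c hc using exists_principalMinor_add_smul_eq M D i hD
  refine ⟨∑ I ∈ univ.powersetCard r, c I, fun t => ?_⟩
  simp only [sumMinors, hc, sum_add_distrib, sum_mul]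

theorem exists_sumMinors_neg_mul_add_single_eq {n ν : ℕ} (r : ℕ)
    (Γ : Matrix (Fin n) (Fin ν) ℝ) (V : Matrix (Fin ν) (Fin n) ℝ) (j : Fin ν) (i : Fin n) :
    ∃ c : ℝ, ∀ t : ℝ,
      sumMinors r (-(Γ * (V + single j i t))) = sumMinors r (-(Γ * V)) + c * t := by
  have hsplit (t : ℝ) :
      -(Γ * (V + single j i t)) = -(Γ * V) + t • -(Γ * single j i (1 : ℝ)) := by
    rw [smul_neg, ← Matrix.mul_smul, smul_single, smul_eq_mul, mul_one, Matrix.mul_add, neg_add]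
  obtain ⟨c, hc⟩ := exists_sumMinors_add_smul_eq r (-(Γ * V)) (-(Γ * single j i (1 : ℝ))) i
    fun a b hb => by rw [Matrix.neg_apply, mul_single_apply_of_ne _ _ _ _ _ hb, neg_zero]
  exact ⟨c, fun t => by rw [hsplit, hc]⟩

section MixEntries

variable {m k R : Type*} [DecidableEq m] [DecidableEq k]

def mixEntries (S : Finset (m × k)) (W V : Matrix m k R) : Matrix m k R :=
  Matrix.of fun a b => if (a, b) ∈ S then W a b else V a b

@[simp]
theorem mixEntries_empty (W V : Matrix m k R) : mixEntries ∅ W V = V := by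
  ext a b
  simp [mixEntries]

@[simp]
theorem mixEntries_univ [Fintype m] [Fintype k] (W V : Matrix m k R) :
    mixEntries univ W V = W := by
  ext a b
  simp [mixEntries]

theorem mixEntries_insert [AddCommGroup R] {S : Finset (m × k)}
    {p : m × k} (hp : p ∉ S) (W V : Matrix m k R) :
    mixEntries (insert p S) W V = mixEntries S W V + single p.1 p.2 (W p.1 p.2 - V p.1 p.2) := by
  ext a b
  by_cases h : (a, b) = p
  · subst h
    simp [mixEntries, hp]
  · have h' : ¬(p.1 = a ∧ p.2 = b) := fun ⟨h₁, h₂⟩ => h (by rw [← h₁, ← h₂])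
    simp [mixEntries, h, h']

end MixEntries

theorem eq_zero_of_forall_neg_lt_mul_nonneg {c w : ℝ} (hw : 0 < w)
    (h : ∀ s, -w < s → 0 ≤ c * s) : c = 0 := by
  have h₁ := h w (by linarith)
  have h₂ := h (-(w / 2)) (by linarith)
  nlinarith

section Admissible

variable {n ν : ℕ} {α : Matrix (Fin n) (Fin ν) ℕ} {V : Matrix (Fin ν) (Fin n) ℝ}

theorem admissible_add_single (hV : admissible α V) {i : Fin n} {j : Fin ν} (hα : 0 < α i j)
    {t : ℝ} (ht : -V j i < t) : admissible α (V + single j i t) := by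
  intro i' j'
  by_cases h : j = j' ∧ i = i'
  · obtain ⟨rfl, rfl⟩ := h
    simp only [Matrix.add_apply, Matrix.single_apply_same]
    exact ⟨fun _ => by linarith, fun h => absurd h hα.ne'⟩
  · simpa only [Matrix.add_apply, Matrix.single_apply_of_ne _ _ _ _ _ h, add_zero] using hV i' j'

theorem eq_zero_of_admissible_add_single (hV : admissible α V) {i : Fin n} {j : Fin ν}
    (hα : α i j = 0) {t : ℝ} (hVt : admissible α (V + single j i t)) : t = 0 := by
  have h := (hVt i j).2 hα
  rwa [Matrix.add_apply, Matrix.single_apply_same, (hV i j).2 hα, zero_add] at h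

theorem admissible_mixEntries {W : Matrix (Fin ν) (Fin n) ℝ} (hW : admissible α W)
    (hV : admissible α V) (S : Finset (Fin ν × Fin n)) : admissible α (mixEntries S W V) := by
  intro i j
  by_cases h : (j, i) ∈ S
  · simpa [mixEntries, h] using hW i j
  · simpa [mixEntries, h] using hV i j

end Admissible

section Propagation

variable {n ν r : ℕ} {α : Matrix (Fin n) (Fin ν) ℕ} {Γ : Matrix (Fin n) (Fin ν) ℝ}

theorem sumMinors_neg_mul_add_single_eq_zero
    (hnonneg : ∀ V, admissible α V → 0 ≤ sumMinors r (-(Γ * V)))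
    {V : Matrix (Fin ν) (Fin n) ℝ} (hV : admissible α V) (h0 : sumMinors r (-(Γ * V)) = 0)
    {j : Fin ν} {i : Fin n} {t : ℝ} (hVt : admissible α (V + single j i t)) :
    sumMinors r (-(Γ * (V + single j i t))) = 0 := by
  obtain ⟨c, hc⟩ := exists_sumMinors_neg_mul_add_single_eq r Γ V j i
  rcases Nat.eq_zero_or_pos (α i j) with hα | hα
  · rw [eq_zero_of_admissible_add_single hV hα hVt, single_zero, add_zero, h0]
  · -- `c * t` is nonnegative for all `t > -V j i`, a neighbourhood of `0`.
    have hc0 : c = 0 := eq_zero_of_forall_neg_lt_mul_nonneg ((hV i j).1 hα) fun s hs => by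
      simpa [hc, h0] using hnonneg _ (admissible_add_single hV hα hs)
    rw [hc, h0, hc0, zero_mul, add_zero]

theorem sumMinors_neg_mul_eq_zero_of_admissible
    (hnonneg : ∀ V, admissible α V → 0 ≤ sumMinors r (-(Γ * V)))
    {V W : Matrix (Fin ν) (Fin n) ℝ} (hV : admissible α V) (hW : admissible α W)
    (h0 : sumMinors r (-(Γ * V)) = 0) : sumMinors r (-(Γ * W)) = 0 := by
  suffices h : ∀ S, sumMinors r (-(Γ * mixEntries S W V)) = 0 by simpa using h univ
  intro S
  induction S using Finset.induction_on with
  | empty => simpa using h0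
  | insert p S hp ih =>
    rw [mixEntries_insert hp]
    refine sumMinors_neg_mul_add_single_eq_zero hnonneg (admissible_mixEntries hW hV S) ih ?_
    rw [← mixEntries_insert hp]
    exact admissible_mixEntries hW hV _

end Propagation

theorem one_point_nondegeneracy_general (n ν : ℕ) (α β : Matrix (Fin n) (Fin ν) ℕ) (r : ℕ)
    (hP0 : ∀ V, admissible α V → ∀ I : Finset (Fin n),
      0 ≤ principalMinor (-(gam α β * V)) I)
    (hexists : ∃ Vstar, admissible α Vstar ∧
      0 < sumMinors r (-(gam α β * Vstar))) :
    ∀ V, admissible α V → 0 < sumMinors r (-(gam α β * V)) := by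
  obtain ⟨Vstar, hVstar, hpos⟩ := hexists
  have hnonneg : ∀ V, admissible α V → 0 ≤ sumMinors r (-(gam α β * V)) :=
    fun V hV => sum_nonneg fun I _ => hP0 V hV I
  intro V hV
  exact (hnonneg V hV).lt_of_ne fun h0 =>
    hpos.ne' (sumMinors_neg_mul_eq_zero_of_admissible hnonneg hV hVstar h0.symm)

/-- For a robustly `P₀` network, if the sum of all `r × r` principal minors of
`-Γ V*` is positive for one admissible `V*`, it is positive for all admissible `V`. -/
theorem one_point_nondegeneracy (n ν : ℕ) (α β : Matrix (Fin n) (Fin ν) ℕ) (r : ℕ)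
    (hr : r = (gam α β).rank)
    (hP0 : ∀ V, admissible α V → ∀ I : Finset (Fin n),
      0 ≤ principalMinor (-(gam α β * V)) I)
    (hexists : ∃ Vstar, admissible α Vstar ∧
      0 < sumMinors r (-(gam α β * Vstar))) :
    ∀ V, admissible α V → 0 < sumMinors r (-(gam α β * V)) :=
  one_point_nondegeneracy_general n ν α β r hP0 hexists
end

section
/- Fix n ≥ 1. For each ordered pair (i, j) with i ≠ j let R_{ij} : ℝ → ℝ be a C¹ function with everywhere nonnegative derivative, for each i let R_i : ℝ → ℝ be a C¹ function with everywhere nonnegative derivative, and let u_1,…,u_n ≥ 0 be real constants. Let x : ℝ → ℝⁿ be differentiable and satisfy, for all t ∈ ℝ and all i ∈ {1,…,n}: x_i'(t) = Σ_{j≠i} ( R_{ji}(x_j(t)) − R_{ij}(x_i(t)) ) + u_i − R_i(x_i(t)). Then the function t ↦ Σ_{i=1}^n |x_i'(t)| is nonincreasing on ℝ. -/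
/-!
Differentiating the rate equations, `v = ẋ` solves the linear time-varying system
`v' = J(t) v`, where `J(t)` is compartmental: by monotonicity of the kinetics its off-diagonal
entries `R'_{ji}(x_j)` and the outflow rates `R'_i(x_i)` are nonnegative, and the constant inflows
disappear. The right derivative of `‖v‖₁` is `∑ σᵢ vᵢ'` for a subgradient `σ` of `‖·‖₁` at `v`;
bounding `σᵢ vⱼ ≤ |vⱼ|`, the transfer terms cancel in the sum and the outflows can only decrease it.
-/

open Finset Set

/-- `σ` is a subgradient of `|·|` at `f t`. -/
lemma HasDerivAt.exists_hasDerivWithinAt_Ici_abs {f : ℝ → ℝ} {f' t : ℝ}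
    (hf : HasDerivAt f f' t) :
    ∃ σ : ℝ, |σ| ≤ 1 ∧ σ * f t = |f t| ∧
      HasDerivWithinAt (fun s => |f s|) (σ * f') (Ici t) t := by
  rcases lt_trichotomy (f t) 0 with hneg | hzero | hpos
  · exact ⟨-1, by norm_num, by rw [abs_of_neg hneg]; ring,
      ((hasDerivAt_abs_neg hneg).comp t hf).hasDerivWithinAt⟩
  · obtain ⟨σ, hσ, hσf'⟩ : ∃ σ : ℝ, |σ| ≤ 1 ∧ σ * f' = |f'| := by
      rcases le_total 0 f' with h | h
      · exact ⟨1, by norm_num, by rw [abs_of_nonneg h, one_mul]⟩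
      · exact ⟨-1, by norm_num, by rw [abs_of_nonpos h]; ring⟩
    refine ⟨σ, hσ, by rw [hzero, mul_zero, abs_zero], ?_⟩
    -- to the right of a zero of `f`, `|f s| = |(s - t) * f'| + o(s - t)`
    have hright := hf.hasDerivWithinAt (s := Ici t)
    rw [hasDerivWithinAt_iff_isLittleO] at hright ⊢
    refine Asymptotics.IsBigO.trans_isLittleO (Asymptotics.IsBigO.of_bound 1 ?_) hright
    filter_upwards [self_mem_nhdsWithin] with s (hs : t ≤ s)
    simp only [hσf', hzero, abs_zero, sub_zero, smul_eq_mul, one_mul, Real.norm_eq_abs]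
    calc |(|f s| - (s - t) * |f'|)| = |(|f s| - |(s - t) * f'|)| := by
          rw [abs_mul, abs_of_nonneg (sub_nonneg.2 hs)]
      _ ≤ |f s - (s - t) * f'| := abs_abs_sub_abs_le_abs_sub _ _
  · exact ⟨1, by norm_num, by rw [abs_of_pos hpos]; ring,
      ((hasDerivAt_abs_pos hpos).comp t hf).hasDerivWithinAt⟩

lemma antitone_of_hasDerivWithinAt_Ici_nonpos {f f' : ℝ → ℝ} (hf : Continuous f)
    (hf' : ∀ t, HasDerivWithinAt f (f' t) (Ici t) t) (hf'_nonpos : ∀ t, f' t ≤ 0) :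
    Antitone f := fun a _ hab =>
  image_le_of_deriv_right_le_deriv_boundary hf.continuousOn (fun t _ => hf' t)
    (B := fun _ => f a) le_rfl continuousOn_const (fun _ _ => hasDerivWithinAt_const _ _ _)
    (fun t _ => hf'_nonpos t) ⟨hab, le_rfl⟩

section Compartmental

variable {ι : Type*} [Fintype ι] [DecidableEq ι]

/-- `a i j` is the coefficient of the transfer from compartment `i` to `j`, `b i` that of the
outflow from `i`. -/
def compartmentalField (a : ι → ι → ℝ) (b : ι → ℝ) (v : ι → ℝ) (i : ι) : ℝ :=
  (∑ j ∈ univ.erase i, (a j i * v j - a i j * v i)) - b i * v i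

lemma sum_sum_erase_sub_swap (g : ι → ι → ℝ) :
    ∑ i, ∑ j ∈ univ.erase i, (g j i - g i j) = 0 := by
  simp only [sum_erase_eq_sub (mem_univ _), sum_sub_distrib]
  rw [sum_comm]
  ring

lemma sum_mul_compartmentalField_nonpos {a : ι → ι → ℝ} {b σ v : ι → ℝ}
    (ha : ∀ i j, i ≠ j → 0 ≤ a i j) (hb : ∀ i, 0 ≤ b i)
    (hσ : ∀ i, |σ i| ≤ 1) (hσv : ∀ i, σ i * v i = |v i|) :
    ∑ i, σ i * compartmentalField a b v i ≤ 0 := by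
  have hσvj : ∀ i j, σ i * v j ≤ |v j| := fun i j =>
    calc σ i * v j ≤ |σ i * v j| := le_abs_self _
      _ = |σ i| * |v j| := abs_mul _ _
      _ ≤ |v j| := mul_le_of_le_one_left (abs_nonneg _) (hσ i)
  have hrow : ∀ i, σ i * compartmentalField a b v i ≤
      ∑ j ∈ univ.erase i, (a j i * |v j| - a i j * |v i|) := by
    intro i
    have htransfer : ∀ j ∈ univ.erase i,
        σ i * (a j i * v j - a i j * v i) ≤ a j i * |v j| - a i j * |v i| := by
      intro j hj
      rw [mul_sub, mul_left_comm, mul_left_comm (σ i), hσv]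
      exact sub_le_sub_right
        (mul_le_mul_of_nonneg_left (hσvj i j) (ha j i (mem_erase.1 hj).1)) _
    have houtflow : 0 ≤ σ i * (b i * v i) := by
      rw [mul_left_comm, hσv]
      exact mul_nonneg (hb i) (abs_nonneg _)
    rw [compartmentalField, mul_sub, mul_sum]
    linarith [sum_le_sum htransfer]
  calc ∑ i, σ i * compartmentalField a b v i
      ≤ ∑ i, ∑ j ∈ univ.erase i, (a j i * |v j| - a i j * |v i|) :=
        sum_le_sum fun i _ => hrow i
    _ = 0 := sum_sum_erase_sub_swap fun j i => a j i * |v j|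

theorem antitone_sum_abs_of_hasDerivAt_compartmentalField {v : ℝ → ι → ℝ}
    {a : ℝ → ι → ι → ℝ} {b : ℝ → ι → ℝ}
    (ha : ∀ t i j, i ≠ j → 0 ≤ a t i j) (hb : ∀ t i, 0 ≤ b t i)
    (hv : ∀ t i, HasDerivAt (fun s => v s i) (compartmentalField (a t) (b t) (v t) i) t) :
    Antitone fun t => ∑ i, |v t i| := by
  choose σ hσ hσv hσderiv using fun t i => (hv t i).exists_hasDerivWithinAt_Ici_abs
  have hcont : Continuous fun t => ∑ i, |v t i| := continuous_finsetSum _ fun i _ =>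
    (continuous_iff_continuousAt.2 fun t => (hv t i).continuousAt).abs
  exact antitone_of_hasDerivWithinAt_Ici_nonpos hcont
    (fun t => HasDerivWithinAt.fun_sum fun i _ => hσderiv t i)
    fun t => sum_mul_compartmentalField_nonpos (ha t) (hb t) (hσ t) (hσv t)

lemma hasDerivAt_linearNetworkRate {R : ι → ι → ℝ → ℝ} {Rout : ι → ℝ → ℝ} (u : ι → ℝ)
    {y : ℝ → ι → ℝ}
    (hR : ∀ i j, i ≠ j → Differentiable ℝ (R i j)) (hRout : ∀ i, Differentiable ℝ (Rout i))
    (hy : ∀ i, Differentiable ℝ fun t => y t i) (t : ℝ) (i : ι) :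
    HasDerivAt (fun s => (∑ j ∈ univ.erase i, (R j i (y s j) - R i j (y s i))) + u i
        - Rout i (y s i))
      (compartmentalField (fun i j => deriv (R i j) (y t i)) (fun i => deriv (Rout i) (y t i))
        (fun j => deriv (fun s => y s j) t) i) t := by
  have hcomp : ∀ {g : ℝ → ℝ} (k : ι), Differentiable ℝ g →
      HasDerivAt (fun s => g (y s k)) (deriv g (y t k) * deriv (fun s => y s k) t) t :=
    fun k hg => (hg _).hasDerivAt.comp t (hy k t).hasDerivAt
  refine ((HasDerivAt.fun_sum fun j hj => ?_).add_const (u i)).sub (hcomp i (hRout i))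
  have hji := (mem_erase.1 hj).1
  exact (hcomp j (hR j i hji)).sub (hcomp i (hR i j hji.symm))

end Compartmental

theorem soc_rlf_linear_general (n : ℕ)
    (R : Fin n → Fin n → ℝ → ℝ) (Rout : Fin n → ℝ → ℝ) (u : Fin n → ℝ)
    (hRC1 : ∀ i j, i ≠ j → ContDiff ℝ 1 (R i j))
    (hRmono : ∀ i j, i ≠ j → ∀ y : ℝ, 0 ≤ deriv (R i j) y)
    (hRoC1 : ∀ i, ContDiff ℝ 1 (Rout i))
    (hRomono : ∀ i, ∀ y : ℝ, 0 ≤ deriv (Rout i) y)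
    (x : ℝ → Fin n → ℝ)
    (hx : ∀ i, Differentiable ℝ (fun t => x t i))
    (hode : ∀ t : ℝ, ∀ i : Fin n, deriv (fun s => x s i) t =
      (∑ j ∈ Finset.univ.erase i, (R j i (x t j) - R i j (x t i))) + u i
        - Rout i (x t i)) :
    Antitone (fun t : ℝ => ∑ i : Fin n, |deriv (fun s => x s i) t|) := by
  refine antitone_sum_abs_of_hasDerivAt_compartmentalField (v := fun t i => deriv (x · i) t)
    (a := fun t i j => deriv (R i j) (x t i)) (b := fun t i => deriv (Rout i) (x t i))
    (fun t i j hij => hRmono i j hij _) (fun t i => hRomono i _) fun t i => ?_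
  rw [show (fun s => deriv (x · i) s) = _ from funext fun s => hode s i]
  exact hasDerivAt_linearNetworkRate u (fun i j hij => (hRC1 i j hij).differentiable one_ne_zero)
    (fun i => (hRoC1 i).differentiable one_ne_zero) hx t i

/-- For a linear (compartmental) network with monotone `C¹` kinetics
`R i j` (reaction `X i → X j`), outflows `Rout i` (`X i → ∅`) and constant
inflows `u i`, the Sum-of-Currents function `V(t) = Σ_i |x_i'(t)|` is
nonincreasing along every trajectory. -/
theorem soc_rlf_linear (n : ℕ) (hn : 1 ≤ n)
    (R : Fin n → Fin n → ℝ → ℝ) (Rout : Fin n → ℝ → ℝ) (u : Fin n → ℝ)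
    (hRC1 : ∀ i j, i ≠ j → ContDiff ℝ 1 (R i j))
    (hRmono : ∀ i j, i ≠ j → ∀ y : ℝ, 0 ≤ deriv (R i j) y)
    (hRoC1 : ∀ i, ContDiff ℝ 1 (Rout i))
    (hRomono : ∀ i, ∀ y : ℝ, 0 ≤ deriv (Rout i) y)
    (hu : ∀ i, 0 ≤ u i)
    (x : ℝ → Fin n → ℝ)
    (hx : ∀ i, Differentiable ℝ (fun t => x t i))
    (hode : ∀ t : ℝ, ∀ i : Fin n, deriv (fun s => x s i) t =
      (∑ j ∈ Finset.univ.erase i, (R j i (x t j) - R i j (x t i))) + u i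
        - Rout i (x t i)) :
    Antitone (fun t : ℝ => ∑ i : Fin n, |deriv (fun s => x s i) t|) :=
  soc_rlf_linear_general n R Rout u hRC1 hRmono hRoC1 hRomono x hx hode
end

section
/- Fix n ≥ 1. For each ordered pair (i, j) with i ≠ j let R_{ij} : ℝ³ → ℝ be a C¹ function that is nondecreasing in each of its three arguments, for each i let R_i : ℝ² → ℝ be a C¹ function nondecreasing in each of its two arguments, and let u_1,…,u_n ≥ 0 be real constants. Let x, p, m : ℝ → ℝⁿ be differentiable and satisfy, for all t ∈ ℝ and all i ∈ {1,…,n}: x_i'(t) = Σ_{j≠i} ( R_{ji}(x_j(t), p_j(t), m_i(t)) − R_{ij}(x_i(t), p_i(t), m_j(t)) ) + u_i − R_i(x_i(t), p_i(t)), together with p_i'(t) = x_i'(t) and m_i'(t) = −x_i'(t) for all t and i. Then the function t ↦ Σ_{i=1}^n |x_i'(t)| is nonincreasing on ℝ. -/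
open Finset Filter Topology

/-!
Write `v = x'`. Differentiating the rate equations and using `p' = v`, `m' = -v`, every rate
`R i j (x i) (p i) (m j)` has derivative `a i j * v i - b i j * v j` and every outflow has
derivative `c i * v i`, with `a, b, c ≥ 0` by monotonicity. So `v' = M v` where `M` is
off-diagonally nonnegative with column sums `-c i ≤ 0`, and such a flow cannot increase the
`ℓ¹` norm: `Σ |v i|` is the maximum of the signed sums `Σ σ i * v i`, and the derivative of every
signed sum that attains the maximum is `≤ 0`.
-/

lemma HasDerivAt.eventually_lt_add_mul_sub {f : ℝ → ℝ} {f' t r : ℝ} (hf : HasDerivAt f f' t)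
    (hr : f' < r) : ∀ᶠ z in 𝓝[>] t, f z < f t + r * (z - t) := by
  have hslope := (hasDerivAt_iff_tendsto_slope.1 hf).mono_left
    (nhdsWithin_mono _ fun z (hz : t < z) => hz.ne')
  filter_upwards [hslope.eventually_lt_const hr, self_mem_nhdsWithin] with z hz (hzt : t < z)
  rw [slope_def_field, div_lt_iff₀ (sub_pos.2 hzt)] at hz
  linarith

theorem antitone_of_hasDerivAt_nonpos_of_active {ι : Type*} [Finite ι] {f f' : ι → ℝ → ℝ}
    {F : ℝ → ℝ} (hF : Continuous F) (hf : ∀ s t, HasDerivAt (f s) (f' s t) t)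
    (hle : ∀ s t, f s t ≤ F t) (hmax : ∀ t, ∃ s, f s t = F t)
    (hactive : ∀ s t, f s t = F t → f' s t ≤ 0) : Antitone F := by
  have hupper : ∀ t r, 0 < r → ∀ᶠ z in 𝓝[>] t, F z < F t + r * (z - t) := by
    intro t r hr
    have hpiece : ∀ s, ∀ᶠ z in 𝓝[>] t, f s z < F t + r * (z - t) := by
      intro s
      rcases (hle s t).lt_or_eq with hlt | heq
      · filter_upwards [nhdsWithin_le_nhds ((hf s t).continuousAt.eventually_lt_const hlt),
          self_mem_nhdsWithin] with z hz (hzt : t < z)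
        linarith [mul_pos hr (sub_pos.2 hzt)]
      · rw [← heq]
        exact (hf s t).eventually_lt_add_mul_sub ((hactive s t heq).trans_lt hr)
    filter_upwards [eventually_all.2 hpiece] with z hz
    obtain ⟨s, hs⟩ := hmax z
    exact hs ▸ hz s
  intro a b hab
  refine image_le_of_liminf_slope_right_le_deriv_boundary (B := fun _ => F a) (B' := fun _ => 0)
    hF.continuousOn le_rfl continuousOn_const (fun z _ => hasDerivWithinAt_const z _ (F a))
    (fun t _ r hr => Eventually.frequently ?_) (Set.right_mem_Icc.2 hab)
  filter_upwards [hupper t r hr, self_mem_nhdsWithin] with z hz (hzt : t < z)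
  rw [slope_def_field, div_lt_iff₀ (sub_pos.2 hzt)]
  linarith

lemma mul_le_abs_of_abs_le_one {σ : ℝ} (hσ : |σ| ≤ 1) (y : ℝ) : σ * y ≤ |y| :=
  (le_abs_self _).trans (abs_mul σ y ▸ mul_le_of_le_one_left (abs_nonneg y) hσ)

theorem antitone_sum_abs_of_hasDerivAt {ι : Type*} [Fintype ι] {w w' : ι → ℝ → ℝ}
    (hw : ∀ i t, HasDerivAt (w i) (w' i t) t)
    (hdecay : ∀ t (σ : ι → ℝ), (∀ i, |σ i| ≤ 1) → (∀ i, σ i * w i t = |w i t|) →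
      ∑ i, σ i * w' i t ≤ 0) :
    Antitone fun t => ∑ i, |w i t| := by
  have habs : ∀ s : SignType, |(s : ℝ)| ≤ 1 := by rintro (_ | _ | _) <;> simp
  have hle : ∀ (σ : ι → SignType) t, ∑ i, (σ i : ℝ) * w i t ≤ ∑ i, |w i t| :=
    fun σ t => sum_le_sum fun i _ => mul_le_abs_of_abs_le_one (habs _) _
  refine antitone_of_hasDerivAt_nonpos_of_active
    (f := fun σ t => ∑ i, (σ i : ℝ) * w i t) (f' := fun σ t => ∑ i, (σ i : ℝ) * w' i t)
    (continuous_finsetSum _ fun i _ => (continuous_iff_continuousAt.2 fun t =>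
      (hw i t).continuousAt).abs)
    (fun σ t => HasDerivAt.fun_sum fun i _ => (hw i t).const_mul _) hle
    (fun t => ⟨fun i => SignType.sign (w i t), sum_congr rfl fun i _ => sign_mul_self _⟩) ?_
  intro σ t hσ
  refine hdecay t _ (fun i => habs _) fun i => ?_
  exact (sum_eq_sum_iff_of_le fun i _ => mul_le_abs_of_abs_le_one (habs _) _).1 hσ i (mem_univ i)

section FluxBalance

variable {ι : Type*} [Fintype ι] [DecidableEq ι]

lemma sum_mul_sum_erase_sub_eq {S : Type*} [CommRing S] (σ : ι → S) (φ : ι → ι → S) :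
    ∑ i, σ i * ∑ j ∈ univ.erase i, (φ j i - φ i j) =
      ∑ i, ∑ j ∈ univ.erase i, (σ j - σ i) * φ i j := by
  have hswap : ∑ i, ∑ j ∈ univ.erase i, σ i * φ j i = ∑ i, ∑ j ∈ univ.erase i, σ j * φ i j :=
    sum_comm' fun i j => by simp [ne_comm]
  simp only [mul_sum, mul_sub, sub_mul, sum_sub_distrib, hswap]

theorem sum_mul_flux_deriv_nonpos (σ w c : ι → ℝ) (a b : ι → ι → ℝ)
    (ha : ∀ i j, i ≠ j → 0 ≤ a i j) (hb : ∀ i j, i ≠ j → 0 ≤ b i j) (hc : ∀ i, 0 ≤ c i)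
    (hσ : ∀ i, |σ i| ≤ 1) (hσw : ∀ i, σ i * w i = |w i|) :
    ∑ i, σ i * (∑ j ∈ univ.erase i,
      ((a j i * w j - b j i * w i) - (a i j * w i - b i j * w j)) - c i * w i) ≤ 0 := by
  have hpair : ∀ i, ∀ j ∈ univ.erase i, (σ j - σ i) * (a i j * w i - b i j * w j) ≤ 0 := by
    intro i j hj
    have hij : i ≠ j := (ne_of_mem_erase hj).symm
    have hsplit : (σ j - σ i) * (a i j * w i - b i j * w j) =
        a i j * (σ j * w i - |w i|) + b i j * (σ i * w j - |w j|) := by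
      rw [← hσw i, ← hσw j]; ring
    rw [hsplit]
    exact add_nonpos
      (mul_nonpos_of_nonneg_of_nonpos (ha i j hij)
        (sub_nonpos.2 (mul_le_abs_of_abs_le_one (hσ j) (w i))))
      (mul_nonpos_of_nonneg_of_nonpos (hb i j hij)
        (sub_nonpos.2 (mul_le_abs_of_abs_le_one (hσ i) (w j))))
  have hout : 0 ≤ ∑ i, σ i * (c i * w i) :=
    sum_nonneg fun i _ => by rw [mul_left_comm, hσw]; exact mul_nonneg (hc i) (abs_nonneg _)
  calc _ = ∑ i, σ i * ∑ j ∈ univ.erase i,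
          ((a j i * w j - b j i * w i) - (a i j * w i - b i j * w j))
        - ∑ i, σ i * (c i * w i) := by simp only [mul_sub, sum_sub_distrib]
    _ = ∑ i, ∑ j ∈ univ.erase i, (σ j - σ i) * (a i j * w i - b i j * w j)
        - ∑ i, σ i * (c i * w i) := by rw [sum_mul_sum_erase_sub_eq σ fun i j => _]
    _ ≤ 0 := sub_nonpos.2 ((sum_nonpos fun i _ => sum_nonpos (hpair i)).trans hout)

end FluxBalance

lemma monotone_uncurry₃ {α β γ δ : Type*} [Preorder α] [Preorder β] [Preorder γ] [Preorder δ]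
    {F : α → β → γ → δ} (h₁ : ∀ b c, Monotone fun a => F a b c)
    (h₂ : ∀ a c, Monotone fun b => F a b c) (h₃ : ∀ a b, Monotone fun c => F a b c) :
    Monotone fun q : α × β × γ => F q.1 q.2.1 q.2.2 :=
  fun _ _ hq => (h₁ _ _ hq.1).trans ((h₂ _ _ hq.2.1).trans (h₃ _ _ hq.2.2))

lemma monotone_uncurry₂ {α β γ : Type*} [Preorder α] [Preorder β] [Preorder γ]
    {F : α → β → γ} (h₁ : ∀ b, Monotone fun a => F a b) (h₂ : ∀ a, Monotone fun b => F a b) :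
    Monotone fun q : α × β => F q.1 q.2 :=
  fun _ _ hq => (h₁ _ hq.1).trans (h₂ _ hq.2)

lemma Monotone.fderiv_apply_nonneg {E : Type*} [NormedAddCommGroup E] [NormedSpace ℝ E]
    [PartialOrder E] [IsOrderedAddMonoid E] [PosSMulMono ℝ E] {Φ : E → ℝ} (hΦ : Monotone Φ)
    {y d : E} (hΦy : DifferentiableAt ℝ Φ y) (hd : 0 ≤ d) : 0 ≤ fderiv ℝ Φ y d := by
  have hline : HasDerivAt (fun e : ℝ => y + e • d) d 0 := by
    simpa using ((hasDerivAt_id (0 : ℝ)).smul_const d).const_add y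
  refine (hΦy.hasFDerivAt.comp_hasDerivAt_of_eq 0 hline (by simp)).nonneg_of_monotone ?_
  exact fun e e' he => hΦ (add_le_add le_rfl (smul_le_smul_of_nonneg_right he hd))

lemma Monotone.exists_hasDerivAt_comp_prod₃ {Φ : ℝ × ℝ × ℝ → ℝ} (hΦ : Monotone Φ)
    {f g h : ℝ → ℝ} {t v w : ℝ} (hΦd : DifferentiableAt ℝ Φ (f t, g t, h t))
    (hf : HasDerivAt f v t) (hg : HasDerivAt g v t) (hh : HasDerivAt h (-w) t) :
    ∃ a b : ℝ, 0 ≤ a ∧ 0 ≤ b ∧ HasDerivAt (fun s => Φ (f s, g s, h s)) (a * v - b * w) t := by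
  set L := fderiv ℝ Φ (f t, g t, h t)
  refine ⟨L (1, 1, 0), L (0, 0, 1), hΦ.fderiv_apply_nonneg hΦd (by simp [Prod.le_def]),
    hΦ.fderiv_apply_nonneg hΦd (by simp [Prod.le_def]), ?_⟩
  have hsplit : ((v, v, -w) : ℝ × ℝ × ℝ) = v • (1, 1, 0) + (-w) • (0, 0, 1) := by simp
  refine (hΦd.hasFDerivAt.comp_hasDerivAt t (hf.prodMk (hg.prodMk hh))).congr_deriv ?_
  rw [hsplit, map_add, map_smul, map_smul, smul_eq_mul, smul_eq_mul]
  ring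

lemma Monotone.exists_hasDerivAt_comp_prod₂ {Φ : ℝ × ℝ → ℝ} (hΦ : Monotone Φ)
    {f g : ℝ → ℝ} {t v : ℝ} (hΦd : DifferentiableAt ℝ Φ (f t, g t))
    (hf : HasDerivAt f v t) (hg : HasDerivAt g v t) :
    ∃ c : ℝ, 0 ≤ c ∧ HasDerivAt (fun s => Φ (f s, g s)) (c * v) t := by
  set L := fderiv ℝ Φ (f t, g t)
  refine ⟨L (1, 1), hΦ.fderiv_apply_nonneg hΦd (by simp [Prod.le_def]), ?_⟩
  have hsplit : ((v, v) : ℝ × ℝ) = v • (1, 1) := by simp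
  refine (hΦd.hasFDerivAt.comp_hasDerivAt t (hf.prodMk hg)).congr_deriv ?_
  rw [hsplit, map_smul, smul_eq_mul, mul_comm]

theorem soc_rlf_catalyst_dimer_general (n : ℕ)
    (R : Fin n → Fin n → ℝ → ℝ → ℝ → ℝ) (Rout : Fin n → ℝ → ℝ → ℝ) (u : Fin n → ℝ)
    (hRC1 : ∀ i j, i ≠ j →
      ContDiff ℝ 1 (fun q : ℝ × ℝ × ℝ => R i j q.1 q.2.1 q.2.2))
    (hRmono1 : ∀ i j, i ≠ j → ∀ b c : ℝ, Monotone (fun a => R i j a b c))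
    (hRmono2 : ∀ i j, i ≠ j → ∀ a c : ℝ, Monotone (fun b => R i j a b c))
    (hRmono3 : ∀ i j, i ≠ j → ∀ a b : ℝ, Monotone (fun c => R i j a b c))
    (hRoC1 : ∀ i, ContDiff ℝ 1 (fun q : ℝ × ℝ => Rout i q.1 q.2))
    (hRomono1 : ∀ i, ∀ b : ℝ, Monotone (fun a => Rout i a b))
    (hRomono2 : ∀ i, ∀ a : ℝ, Monotone (fun b => Rout i a b))
    (x p m : ℝ → Fin n → ℝ)
    (hx : ∀ i, Differentiable ℝ (fun t => x t i))
    (hp : ∀ i, Differentiable ℝ (fun t => p t i))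
    (hm : ∀ i, Differentiable ℝ (fun t => m t i))
    (hode : ∀ t : ℝ, ∀ i : Fin n, deriv (fun s => x s i) t =
      (∑ j ∈ Finset.univ.erase i,
        (R j i (x t j) (p t j) (m t i) - R i j (x t i) (p t i) (m t j))) + u i
        - Rout i (x t i) (p t i))
    (hpode : ∀ t : ℝ, ∀ i : Fin n,
      deriv (fun s => p s i) t = deriv (fun s => x s i) t)
    (hmode : ∀ t : ℝ, ∀ i : Fin n,
      deriv (fun s => m s i) t = -deriv (fun s => x s i) t) :
    Antitone (fun t : ℝ => ∑ i : Fin n, |deriv (fun s => x s i) t|) := by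
  obtain ⟨v, hv⟩ : ∃ v : Fin n → ℝ → ℝ, ∀ i t, deriv (fun s => x s i) t = v i t :=
    ⟨_, fun _ _ => rfl⟩
  simp only [hv] at hode hpode hmode ⊢
  have hxv : ∀ i t, HasDerivAt (fun s => x s i) (v i t) t :=
    fun i t => hv i t ▸ (hx i t).hasDerivAt
  have hpv : ∀ i t, HasDerivAt (fun s => p s i) (v i t) t :=
    fun i t => hpode t i ▸ (hp i t).hasDerivAt
  have hmv : ∀ i t, HasDerivAt (fun s => m s i) (-v i t) t :=
    fun i t => hmode t i ▸ (hm i t).hasDerivAt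
  choose! a b hab using fun i j (hij : i ≠ j) t =>
    (monotone_uncurry₃ (hRmono1 i j hij) (hRmono2 i j hij)
      (hRmono3 i j hij)).exists_hasDerivAt_comp_prod₃
      ((hRC1 i j hij).differentiable one_ne_zero _) (hxv i t) (hpv i t) (hmv j t)
  choose c hc hcd using fun i t =>
    (monotone_uncurry₂ (hRomono1 i) (hRomono2 i)).exists_hasDerivAt_comp_prod₂
      ((hRoC1 i).differentiable one_ne_zero _) (hxv i t) (hpv i t)
  have hvd : ∀ i t, HasDerivAt (v i) (∑ j ∈ univ.erase i,
      ((a j i t * v j t - b j i t * v i t) - (a i j t * v i t - b i j t * v j t))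
        - c i t * v i t) t := by
    intro i t
    refine HasDerivAt.congr_of_eventuallyEq ?_ (Eventually.of_forall fun s => hode s i)
    refine ((HasDerivAt.fun_sum fun j hj => ?_).add_const (u i)).sub (hcd i t)
    have hji : j ≠ i := ne_of_mem_erase hj
    exact (hab j i hji t).2.2.fun_sub (hab i j hji.symm t).2.2
  exact antitone_sum_abs_of_hasDerivAt hvd fun t σ hσ hσv =>
    sum_mul_flux_deriv_nonpos σ (v · t) (c · t) (a · · t) (b · · t)
      (fun i j hij => (hab i j hij t).1) (fun i j hij => (hab i j hij t).2.1) (hc · t) hσ hσv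

/-- For a catalyst/dimer modification of a linear network — reaction `X i → X j`
has rate `R i j` depending monotonically on `x i`, the dimer concentration `p i`
and the catalyst concentration `m j`, outflow `X i → ∅` has rate `Rout i (x i) (p i)`,
inflows are constant, and `p i' = x i'`, `m i' = -x i'` — the Sum-of-Currents
function `V(t) = Σ_i |x_i'(t)|` is nonincreasing along every trajectory. -/
theorem soc_rlf_catalyst_dimer (n : ℕ) (hn : 1 ≤ n)
    (R : Fin n → Fin n → ℝ → ℝ → ℝ → ℝ) (Rout : Fin n → ℝ → ℝ → ℝ) (u : Fin n → ℝ)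
    (hRC1 : ∀ i j, i ≠ j →
      ContDiff ℝ 1 (fun q : ℝ × ℝ × ℝ => R i j q.1 q.2.1 q.2.2))
    (hRmono1 : ∀ i j, i ≠ j → ∀ b c : ℝ, Monotone (fun a => R i j a b c))
    (hRmono2 : ∀ i j, i ≠ j → ∀ a c : ℝ, Monotone (fun b => R i j a b c))
    (hRmono3 : ∀ i j, i ≠ j → ∀ a b : ℝ, Monotone (fun c => R i j a b c))
    (hRoC1 : ∀ i, ContDiff ℝ 1 (fun q : ℝ × ℝ => Rout i q.1 q.2))
    (hRomono1 : ∀ i, ∀ b : ℝ, Monotone (fun a => Rout i a b))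
    (hRomono2 : ∀ i, ∀ a : ℝ, Monotone (fun b => Rout i a b))
    (hu : ∀ i, 0 ≤ u i)
    (x p m : ℝ → Fin n → ℝ)
    (hx : ∀ i, Differentiable ℝ (fun t => x t i))
    (hp : ∀ i, Differentiable ℝ (fun t => p t i))
    (hm : ∀ i, Differentiable ℝ (fun t => m t i))
    (hode : ∀ t : ℝ, ∀ i : Fin n, deriv (fun s => x s i) t =
      (∑ j ∈ Finset.univ.erase i,
        (R j i (x t j) (p t j) (m t i) - R i j (x t i) (p t i) (m t j))) + u i
        - Rout i (x t i) (p t i))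
    (hpode : ∀ t : ℝ, ∀ i : Fin n,
      deriv (fun s => p s i) t = deriv (fun s => x s i) t)
    (hmode : ∀ t : ℝ, ∀ i : Fin n,
      deriv (fun s => m s i) t = -deriv (fun s => x s i) t) :
    Antitone (fun t : ℝ => ∑ i : Fin n, |deriv (fun s => x s i) t|) :=
  soc_rlf_catalyst_dimer_general n R Rout u hRC1 hRmono1 hRmono2 hRmono3 hRoC1 hRomono1 hRomono2 x p
    m hx hp hm hode hpode hmode
end

section
/- Fix n ≥ 1. For each ordered pair (i, j) with i ≠ j let R_{ij} : ℝ³ → ℝ be a C¹ function nondecreasing in each argument, for each i let R_i : ℝ² → ℝ be C¹ and nondecreasing in each argument, and let u_1,…,u_n ≥ 0 be constants; assume in addition that every partial derivative of every R_{ij} and every R_i is strictly positive at every point all of whose coordinates are strictly positive. Let x, p, m : [0,∞) → ℝⁿ be differentiable, with x bounded, with x_i(t) > 0, p_i(t) > 0, m_i(t) > 0 for all t ≥ 0 and all i, and satisfying for all t ≥ 0 and all i: x_i'(t) = Σ_{j≠i} ( R_{ji}(x_j(t), p_j(t), m_i(t)) − R_{ij}(x_i(t), p_i(t), m_j(t))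 ) + u_i − R_i(x_i(t), p_i(t)), p_i'(t) = x_i'(t), and m_i'(t) = −x_i'(t). If the function t ↦ Σ_{i=1}^n |x_i'(t)| is constant on [0,∞), then x_i'(t) = 0 for all t ≥ 0 and all i. -/
/-!
Differentiating the equation once more gives, at each time `t₀` (one-sidedly at `t₀ = 0`),
`x'' = M x'` for a compartmental matrix `M`: its off-diagonal entries `c i j` are positive and
its column sums `-g i` are negative, by the positivity of the partial derivatives of the rates.
The right derivative of `V = ‖x'‖₁` at `t₀` is `⟪σ, M x'(t₀)⟫` for a subgradient `σ` of the
`ℓ¹` norm at `x'(t₀)`, and for a compartmental matrix this is at most `-∑ g i |x i'(t₀)|`.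
As `V` is constant, this right derivative vanishes, hence so does `x'(t₀)`.
-/

open Finset Set Asymptotics

theorem fderiv_prod_apply {E F G : Type*} [NormedAddCommGroup E] [NormedSpace ℝ E]
    [NormedAddCommGroup F] [NormedSpace ℝ F] [NormedAddCommGroup G] [NormedSpace ℝ G]
    {Φ : E × F → G} {z : E × F} (hΦ : DifferentiableAt ℝ Φ z) (v : E) (w : F) :
    fderiv ℝ Φ z (v, w) =
      fderiv ℝ (fun e => Φ (e, z.2)) z.1 v + fderiv ℝ (fun f => Φ (z.1, f)) z.2 w := by
  have hΦ' : HasFDerivAt Φ (fderiv ℝ Φ z) (z.1, z.2) := hΦ.hasFDerivAt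
  have h₁ : HasFDerivAt (fun e => Φ (e, z.2)) ((fderiv ℝ Φ z).comp (.inl ℝ E F)) z.1 :=
    hΦ'.comp z.1 (hasFDerivAt_prodMk_left z.1 z.2)
  have h₂ : HasFDerivAt (fun f => Φ (z.1, f)) ((fderiv ℝ Φ z).comp (.inr ℝ E F)) z.2 :=
    hΦ'.comp z.2 (hasFDerivAt_prodMk_right z.1 z.2)
  rw [h₁.fderiv, h₂.fderiv, ContinuousLinearMap.comp_apply, ContinuousLinearMap.comp_apply,
    ← map_add]
  simp

theorem hasDerivAt_comp₂ {G : ℝ → ℝ → ℝ} {f₁ f₂ : ℝ → ℝ} {a₁ a₂ t : ℝ}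
    (hG : DifferentiableAt ℝ (fun q : ℝ × ℝ => G q.1 q.2) (f₁ t, f₂ t))
    (h₁ : HasDerivAt f₁ a₁ t) (h₂ : HasDerivAt f₂ a₂ t) :
    HasDerivAt (fun s => G (f₁ s) (f₂ s))
      (a₁ * deriv (fun y => G y (f₂ t)) (f₁ t) + a₂ * deriv (fun y => G (f₁ t) y) (f₂ t)) t := by
  refine (hG.hasFDerivAt.comp_hasDerivAt t (h₁.prodMk h₂)).congr_deriv ?_
  rw [fderiv_prod_apply hG]
  simp only [fderiv_eq_smul_deriv, smul_eq_mul]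

theorem hasDerivAt_comp₃ {G : ℝ → ℝ → ℝ → ℝ} {f₁ f₂ f₃ : ℝ → ℝ} {a₁ a₂ a₃ t : ℝ}
    (hG : DifferentiableAt ℝ (fun q : ℝ × ℝ × ℝ => G q.1 q.2.1 q.2.2) (f₁ t, f₂ t, f₃ t))
    (h₁ : HasDerivAt f₁ a₁ t) (h₂ : HasDerivAt f₂ a₂ t) (h₃ : HasDerivAt f₃ a₃ t) :
    HasDerivAt (fun s => G (f₁ s) (f₂ s) (f₃ s))
      (a₁ * deriv (fun y => G y (f₂ t) (f₃ t)) (f₁ t)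
        + a₂ * deriv (fun y => G (f₁ t) y (f₃ t)) (f₂ t)
        + a₃ * deriv (fun y => G (f₁ t) (f₂ t) y) (f₃ t)) t := by
  have hG₂₃ : DifferentiableAt ℝ (fun q : ℝ × ℝ => G (f₁ t) q.1 q.2) (f₂ t, f₃ t) :=
    hG.comp _ (hasFDerivAt_prodMk_right (f₁ t) (f₂ t, f₃ t)).differentiableAt
  refine (hG.hasFDerivAt.comp_hasDerivAt t (h₁.prodMk (h₂.prodMk h₃))).congr_deriv ?_
  rw [fderiv_prod_apply hG, fderiv_prod_apply hG₂₃]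
  simp only [fderiv_eq_smul_deriv, smul_eq_mul, add_assoc]

theorem HasDerivWithinAt.exists_abs_Ici {f : ℝ → ℝ} {D t₀ : ℝ}
    (hf : HasDerivWithinAt f D (Ici t₀) t₀) :
    ∃ σ : ℝ, |σ| ≤ 1 ∧ σ * f t₀ = |f t₀| ∧
      HasDerivWithinAt (fun t => |f t|) (σ * D) (Ici t₀) t₀ := by
  by_cases h : f t₀ = 0
  · refine ⟨SignType.sign D, ?_, by simp [h], ?_⟩
    · rcases lt_trichotomy D 0 with hD | hD | hD <;> simp [hD]
    · rw [sign_mul_self, hasDerivWithinAt_iff_isLittleO]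
      refine IsBigO.trans_isLittleO ?_ (hasDerivWithinAt_iff_isLittleO.mp hf)
      refine IsBigO.of_bound 1 ?_
      filter_upwards [self_mem_nhdsWithin] with t (ht : t₀ ≤ t)
      simp only [h, abs_zero, sub_zero, smul_eq_mul, Real.norm_eq_abs, one_mul]
      calc |(|f t| - (t - t₀) * |D|)| = |(|f t| - |(t - t₀) * D|)| := by
            rw [abs_mul, abs_of_nonneg (sub_nonneg.mpr ht)]
        _ ≤ |f t - (t - t₀) * D| := abs_abs_sub_abs_le_abs_sub _ _
  · exact ⟨SignType.sign (f t₀), by rcases lt_trichotomy (f t₀) 0 with h' | h' | h' <;> simp [h'],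
      sign_mul_self _, (hasDerivAt_abs h).comp_hasDerivWithinAt t₀ hf⟩

theorem sum_mul_compartmental_le {ι : Type*} [Fintype ι] [DecidableEq ι] {c : ι → ι → ℝ}
    {g σ Y : ι → ℝ} (hc : ∀ i j, i ≠ j → 0 ≤ c i j) (hσ : ∀ i, |σ i| ≤ 1)
    (hσY : ∀ i, σ i * Y i = |Y i|) :
    ∑ i, σ i * ((∑ j ∈ univ.erase i, (c j i * Y j - c i j * Y i)) - g i * Y i) ≤
      -∑ i, g i * |Y i| := by
  have hσ_le : ∀ i j, σ i * Y j ≤ |Y j| := fun i j =>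
    (le_abs_self _).trans (by rw [abs_mul]; exact mul_le_of_le_one_left (abs_nonneg _) (hσ i))
  have hflux : ∑ i, ∑ j ∈ univ.erase i, c j i * |Y j| = ∑ i, ∑ j ∈ univ.erase i, c i j * |Y i| :=
    sum_comm' fun i j => by
      simp only [Finset.mem_univ, mem_erase, ne_eq, true_and, and_true, eq_comm]
  calc ∑ i, σ i * ((∑ j ∈ univ.erase i, (c j i * Y j - c i j * Y i)) - g i * Y i)
      = ∑ i, ((∑ j ∈ univ.erase i, (c j i * (σ i * Y j) - c i j * |Y i|)) - g i * |Y i|) := by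
        refine sum_congr rfl fun i _ => ?_
        rw [mul_sub, mul_sum, ← hσY i]
        congr 1
        · exact sum_congr rfl fun j _ => by ring
        · ring
    _ ≤ ∑ i, ((∑ j ∈ univ.erase i, (c j i * |Y j| - c i j * |Y i|)) - g i * |Y i|) := by
        gcongr with i _ j hj
        exacts [hc j i (ne_of_mem_erase hj), hσ_le i j]
    _ = -∑ i, g i * |Y i| := by
        simp only [sum_sub_distrib, hflux]
        ring

theorem exists_hasDerivAt_catalystDimer_rates {ι : Type*} [Fintype ι] [DecidableEq ι]
    (R : ι → ι → ℝ → ℝ → ℝ → ℝ) (Rout : ι → ℝ → ℝ → ℝ) (u : ι → ℝ)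
    (hRpos1 : ∀ i j, i ≠ j → ∀ a b c : ℝ, 0 < a → 0 < b → 0 < c →
      0 < deriv (fun a' => R i j a' b c) a)
    (hRpos2 : ∀ i j, i ≠ j → ∀ a b c : ℝ, 0 < a → 0 < b → 0 < c →
      0 < deriv (fun b' => R i j a b' c) b)
    (hRpos3 : ∀ i j, i ≠ j → ∀ a b c : ℝ, 0 < a → 0 < b → 0 < c →
      0 < deriv (fun c' => R i j a b c') c)
    (hRopos1 : ∀ i, ∀ a b : ℝ, 0 < a → 0 < b → 0 < deriv (fun a' => Rout i a' b) a)
    (hRopos2 : ∀ i, ∀ a b : ℝ, 0 < a → 0 < b → 0 < deriv (fun b' => Rout i a b') b)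
    (x p m : ℝ → ι → ℝ) {t₀ : ℝ} {Y : ι → ℝ}
    (hR : ∀ i j, i ≠ j → DifferentiableAt ℝ (fun q : ℝ × ℝ × ℝ => R i j q.1 q.2.1 q.2.2)
      (x t₀ i, p t₀ i, m t₀ j))
    (hRout : ∀ i, DifferentiableAt ℝ (fun q : ℝ × ℝ => Rout i q.1 q.2) (x t₀ i, p t₀ i))
    (hxpos : ∀ i, 0 < x t₀ i) (hppos : ∀ i, 0 < p t₀ i) (hmpos : ∀ i, 0 < m t₀ i)
    (hx : ∀ i, HasDerivAt (fun t => x t i) (Y i) t₀)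
    (hp : ∀ i, HasDerivAt (fun t => p t i) (Y i) t₀)
    (hm : ∀ i, HasDerivAt (fun t => m t i) (-Y i) t₀) :
    ∃ (c : ι → ι → ℝ) (g : ι → ℝ), (∀ i j, i ≠ j → 0 < c i j) ∧ (∀ i, 0 < g i) ∧ ∀ i,
      HasDerivAt (fun t => (∑ j ∈ univ.erase i,
          (R j i (x t j) (p t j) (m t i) - R i j (x t i) (p t i) (m t j))) + u i
          - Rout i (x t i) (p t i))
        ((∑ j ∈ univ.erase i, (c j i * Y j - c i j * Y i)) - g i * Y i) t₀ := by
  -- A perturbation of `x i` drags the dimer `p i` along and pushes the catalyst `m i` of `R j i`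
  -- the other way, so it is passed on to `x j` at rate `A i j + B j i`.
  let A : ι → ι → ℝ := fun i j => deriv (fun a => R i j a (p t₀ i) (m t₀ j)) (x t₀ i)
    + deriv (fun b => R i j (x t₀ i) b (m t₀ j)) (p t₀ i)
  let B : ι → ι → ℝ := fun i j => deriv (fun c => R i j (x t₀ i) (p t₀ i) c) (m t₀ j)
  let g : ι → ℝ := fun i => deriv (fun a => Rout i a (p t₀ i)) (x t₀ i)
    + deriv (fun b => Rout i (x t₀ i) b) (p t₀ i)
  have hrate : ∀ i j, i ≠ j →
      HasDerivAt (fun t => R i j (x t i) (p t i) (m t j)) (A i j * Y i - B i j * Y j) t₀ :=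
    fun i j hij => (hasDerivAt_comp₃ (hR i j hij) (hx i) (hp i) (hm j)).congr_deriv (by ring)
  have hout : ∀ i, HasDerivAt (fun t => Rout i (x t i) (p t i)) (g i * Y i) t₀ :=
    fun i => (hasDerivAt_comp₂ (hRout i) (hx i) (hp i)).congr_deriv (by ring)
  refine ⟨fun i j => A i j + B j i, g, fun i j hij => ?_, fun i => ?_, fun i => ?_⟩
  · exact add_pos (add_pos (hRpos1 i j hij _ _ _ (hxpos i) (hppos i) (hmpos j))
      (hRpos2 i j hij _ _ _ (hxpos i) (hppos i) (hmpos j)))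
      (hRpos3 j i hij.symm _ _ _ (hxpos j) (hppos j) (hmpos i))
  · exact add_pos (hRopos1 i _ _ (hxpos i) (hppos i)) (hRopos2 i _ _ (hxpos i) (hppos i))
  · refine (((HasDerivAt.fun_sum fun j hj =>
      (hrate j i (ne_of_mem_erase hj)).sub (hrate i j (ne_of_mem_erase hj).symm)).add_const
        (u i)).sub (hout i)).congr_deriv ?_
    congr 1
    refine sum_congr rfl fun j _ => ?_
    dsimp only
    ring

theorem lasalle_catalyst_dimer_general (n : ℕ)
    (R : Fin n → Fin n → ℝ → ℝ → ℝ → ℝ) (Rout : Fin n → ℝ → ℝ → ℝ) (u : Fin n → ℝ)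
    (hRC1 : ∀ i j, i ≠ j →
      ContDiff ℝ 1 (fun q : ℝ × ℝ × ℝ => R i j q.1 q.2.1 q.2.2))
    (hRoC1 : ∀ i, ContDiff ℝ 1 (fun q : ℝ × ℝ => Rout i q.1 q.2))
    (hRpos1 : ∀ i j, i ≠ j → ∀ a b c : ℝ, 0 < a → 0 < b → 0 < c →
      0 < deriv (fun a' => R i j a' b c) a)
    (hRpos2 : ∀ i j, i ≠ j → ∀ a b c : ℝ, 0 < a → 0 < b → 0 < c →
      0 < deriv (fun b' => R i j a b' c) b)
    (hRpos3 : ∀ i j, i ≠ j → ∀ a b c : ℝ, 0 < a → 0 < b → 0 < c →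
      0 < deriv (fun c' => R i j a b c') c)
    (hRopos1 : ∀ i, ∀ a b : ℝ, 0 < a → 0 < b →
      0 < deriv (fun a' => Rout i a' b) a)
    (hRopos2 : ∀ i, ∀ a b : ℝ, 0 < a → 0 < b →
      0 < deriv (fun b' => Rout i a b') b)
    (x p m : ℝ → Fin n → ℝ)
    (hx : ∀ i, ∀ t : ℝ, 0 ≤ t → DifferentiableAt ℝ (fun s => x s i) t)
    (hp : ∀ i, ∀ t : ℝ, 0 ≤ t → DifferentiableAt ℝ (fun s => p s i) t)
    (hm : ∀ i, ∀ t : ℝ, 0 ≤ t → DifferentiableAt ℝ (fun s => m s i) t)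
    (hxpos : ∀ t : ℝ, 0 ≤ t → ∀ i, 0 < x t i)
    (hppos : ∀ t : ℝ, 0 ≤ t → ∀ i, 0 < p t i)
    (hmpos : ∀ t : ℝ, 0 ≤ t → ∀ i, 0 < m t i)
    (hode : ∀ t : ℝ, 0 ≤ t → ∀ i : Fin n, deriv (fun s => x s i) t =
      (∑ j ∈ Finset.univ.erase i,
        (R j i (x t j) (p t j) (m t i) - R i j (x t i) (p t i) (m t j))) + u i
        - Rout i (x t i) (p t i))
    (hpode : ∀ t : ℝ, 0 ≤ t → ∀ i : Fin n,
      deriv (fun s => p s i) t = deriv (fun s => x s i) t)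
    (hmode : ∀ t : ℝ, 0 ≤ t → ∀ i : Fin n,
      deriv (fun s => m s i) t = -deriv (fun s => x s i) t)
    (hVconst : ∀ s t : ℝ, 0 ≤ s → 0 ≤ t →
      (∑ i : Fin n, |deriv (fun τ => x τ i) s|) =
        ∑ i : Fin n, |deriv (fun τ => x τ i) t|) :
    ∀ t : ℝ, 0 ≤ t → ∀ i : Fin n, deriv (fun s => x s i) t = 0 := by
  intro t₀ ht₀ i₀
  set Y : Fin n → ℝ := fun i => deriv (fun s => x s i) t₀
  obtain ⟨c, g, hc, hg, hfield⟩ := exists_hasDerivAt_catalystDimer_rates R Rout u hRpos1 hRpos2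
    hRpos3 hRopos1 hRopos2 x p m (Y := Y)
    (fun i j hij => (hRC1 i j hij).differentiable one_ne_zero _)
    (fun i => (hRoC1 i).differentiable one_ne_zero _) (hxpos t₀ ht₀) (hppos t₀ ht₀)
    (hmpos t₀ ht₀) (fun i => (hx i t₀ ht₀).hasDerivAt)
    (fun i => (hp i t₀ ht₀).hasDerivAt.congr_deriv (hpode t₀ ht₀ i))
    (fun i => (hm i t₀ ht₀).hasDerivAt.congr_deriv (hmode t₀ ht₀ i))
  have hx'' := fun i => (hfield i).hasDerivWithinAt.congr (s := Ici t₀)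
    (fun t ht => hode t (ht₀.trans ht) i) (hode t₀ ht₀ i)
  choose σ hσ hσY hV using fun i => (hx'' i).exists_abs_Ici
  have hV0 : ∑ i, σ i * ((∑ j ∈ univ.erase i, (c j i * Y j - c i j * Y i)) - g i * Y i) = 0 :=
    (uniqueDiffWithinAt_Ici t₀).eq_deriv _ (HasDerivWithinAt.fun_sum fun i _ => hV i)
      ((hasDerivWithinAt_const t₀ _ _).congr (fun t ht => hVconst t t₀ (ht₀.trans ht) ht₀) rfl)
  have hle := sum_mul_compartmental_le (Y := Y) (g := g) (fun i j h => (hc i j h).le) hσ hσY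
  have hgY : ∑ j, g j * |Y j| = 0 :=
    le_antisymm (by linarith) (sum_nonneg fun j _ => mul_nonneg (hg j).le (abs_nonneg _))
  simpa [(hg i₀).ne'] using (sum_eq_zero_iff_of_nonneg fun j _ =>
    mul_nonneg (hg j).le (abs_nonneg (Y j))).mp hgY i₀ (Finset.mem_univ i₀)

/-- LaSalle principle for a catalyst/dimer modification of a linear network:
along a bounded positive trajectory on `[0, ∞)` on which the Sum-of-Currents
function `V(t) = Σ_i |x_i'(t)|` is constant, necessarily `x' ≡ 0`. -/
theorem lasalle_catalyst_dimer (n : ℕ) (hn : 1 ≤ n)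
    (R : Fin n → Fin n → ℝ → ℝ → ℝ → ℝ) (Rout : Fin n → ℝ → ℝ → ℝ) (u : Fin n → ℝ)
    (hRC1 : ∀ i j, i ≠ j →
      ContDiff ℝ 1 (fun q : ℝ × ℝ × ℝ => R i j q.1 q.2.1 q.2.2))
    (hRmono1 : ∀ i j, i ≠ j → ∀ b c : ℝ, Monotone (fun a => R i j a b c))
    (hRmono2 : ∀ i j, i ≠ j → ∀ a c : ℝ, Monotone (fun b => R i j a b c))
    (hRmono3 : ∀ i j, i ≠ j → ∀ a b : ℝ, Monotone (fun c => R i j a b c))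
    (hRoC1 : ∀ i, ContDiff ℝ 1 (fun q : ℝ × ℝ => Rout i q.1 q.2))
    (hRomono1 : ∀ i, ∀ b : ℝ, Monotone (fun a => Rout i a b))
    (hRomono2 : ∀ i, ∀ a : ℝ, Monotone (fun b => Rout i a b))
    (hu : ∀ i, 0 ≤ u i)
    (hRpos1 : ∀ i j, i ≠ j → ∀ a b c : ℝ, 0 < a → 0 < b → 0 < c →
      0 < deriv (fun a' => R i j a' b c) a)
    (hRpos2 : ∀ i j, i ≠ j → ∀ a b c : ℝ, 0 < a → 0 < b → 0 < c →
      0 < deriv (fun b' => R i j a b' c) b)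
    (hRpos3 : ∀ i j, i ≠ j → ∀ a b c : ℝ, 0 < a → 0 < b → 0 < c →
      0 < deriv (fun c' => R i j a b c') c)
    (hRopos1 : ∀ i, ∀ a b : ℝ, 0 < a → 0 < b →
      0 < deriv (fun a' => Rout i a' b) a)
    (hRopos2 : ∀ i, ∀ a b : ℝ, 0 < a → 0 < b →
      0 < deriv (fun b' => Rout i a b') b)
    (x p m : ℝ → Fin n → ℝ)
    (hx : ∀ i, ∀ t : ℝ, 0 ≤ t → DifferentiableAt ℝ (fun s => x s i) t)
    (hp : ∀ i, ∀ t : ℝ, 0 ≤ t → DifferentiableAt ℝ (fun s => p s i) t)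
    (hm : ∀ i, ∀ t : ℝ, 0 ≤ t → DifferentiableAt ℝ (fun s => m s i) t)
    (hbdd : ∃ C : ℝ, ∀ t : ℝ, 0 ≤ t → ∀ i, |x t i| ≤ C)
    (hxpos : ∀ t : ℝ, 0 ≤ t → ∀ i, 0 < x t i)
    (hppos : ∀ t : ℝ, 0 ≤ t → ∀ i, 0 < p t i)
    (hmpos : ∀ t : ℝ, 0 ≤ t → ∀ i, 0 < m t i)
    (hode : ∀ t : ℝ, 0 ≤ t → ∀ i : Fin n, deriv (fun s => x s i) t =
      (∑ j ∈ Finset.univ.erase i,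
        (R j i (x t j) (p t j) (m t i) - R i j (x t i) (p t i) (m t j))) + u i
        - Rout i (x t i) (p t i))
    (hpode : ∀ t : ℝ, 0 ≤ t → ∀ i : Fin n,
      deriv (fun s => p s i) t = deriv (fun s => x s i) t)
    (hmode : ∀ t : ℝ, 0 ≤ t → ∀ i : Fin n,
      deriv (fun s => m s i) t = -deriv (fun s => x s i) t)
    (hVconst : ∀ s t : ℝ, 0 ≤ s → 0 ≤ t →
      (∑ i : Fin n, |deriv (fun τ => x τ i) s|) =
        ∑ i : Fin n, |deriv (fun τ => x τ i) t|) :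
    ∀ t : ℝ, 0 ≤ t → ∀ i : Fin n, deriv (fun s => x s i) t = 0 :=
  lasalle_catalyst_dimer_general n R Rout u hRC1 hRoC1 hRpos1 hRpos2 hRpos3 hRopos1 hRopos2 x p m hx
    hp hm hxpos hppos hmpos hode hpode hmode hVconst
end

section
/- Let a reaction network N be given by α, β ∈ ℕ^{n×ν} with Γ = β − α, admissible Jacobian set 𝒦, and r = rank Γ. Assume N has no catalytic reactions (for all i, j, not both α_{ij} > 0 and β_{ij} > 0). Let Ñ be obtained from N by reversing a reaction j: α̃ ∈ ℕ^{n×(ν+1)} agrees with α on the first ν columns and its column ν+1 equals column j of β, while β̃ agrees with β on the first ν columns and its column ν+1 equals column j of α; set Γ̃ = β̃ − α̃, r̃ = rank Γ̃, and let 𝒦̃ be the admissible Jacobian set of Ñ. Assume: N is robustly P0; N is robustly non-degenerate; and Ñ is robustly P0. Then Ñ is robustly non-degenerate: for every Ṽ ∈ 𝒦̃ the sum of all r̃×r̃ principal minors of −Γ̃Ṽ is nonzero. -/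
open Matrix Finset

/-! Reversing reaction `j` appends the column `-Γⱼ` to `Γ`, so the rank is unchanged, and
`-Γ̃Ṽ = -ΓV + Γⱼ ṽᵀ`, where `V` is `Ṽ` without its last row `ṽ`. Scaling `ṽ` by `ε > 0` keeps the
Jacobian admissible, and since the perturbation has rank one every principal minor, hence the sum
`p(ε)` of the `r × r` ones, is affine in `ε`. Now `p(0) > 0` (robustly `P₀` and non-degenerate)
and `p(2) ≥ 0` (`Ñ` robustly `P₀`), so `p(1) ≠ 0`. -/

namespace Matrix

section

variable {m R : Type*} [Fintype m] [DecidableEq m] [CommRing R]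

theorem det_eq_zero_of_rows_smul_same {M : Matrix m m R} {i i' : m} (hne : i ≠ i')
    {a b : R} {v : m → R} (hi : M i = a • v) (hi' : M i' = b • v) : M.det = 0 := by
  have hrow : (M.updateRow i v) i' = b • v := by
    rw [updateRow_ne hne.symm, hi']
  calc M.det = a * (M.updateRow i v).det := by
        rw [← det_updateRow_smul, ← hi, updateRow_eq_self]
    _ = a * (b * ((M.updateRow i v).updateRow i' v).det) := by
        rw [← det_updateRow_smul (M.updateRow i v) i' b v, ← hrow, updateRow_eq_self]
    _ = 0 := by
        rw [det_zero_of_row_eq hne (by simp [updateRow_ne hne]), mul_zero, mul_zero]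

theorem det_add_vecMulVec (A : Matrix m m R) (u v : m → R) :
    (A + vecMulVec u v).det = A.det + ∑ i, u i * (A.updateRow i v).det := by
  have hrow : ∀ i, vecMulVec u v i = u i • v := fun i => by ext; simp [vecMulVec_apply]
  let term : Finset m → R := fun s => detRowAlternating (s.piecewise (vecMulVec u v) A)
  have hexpand : (A + vecMulVec u v).det = ∑ s, term s := by
    rw [add_comm]; exact detRowAlternating.map_add_univ _ _
  have hsmall : ∀ s ∉ insert ∅ (univ.image fun i : m => ({i} : Finset m)), term s = 0 := by
    intro s hs
    have hcard : 1 < s.card := by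
      by_contra! h
      rcases Nat.le_one_iff_eq_zero_or_eq_one.mp h with h | h
      · exact hs (mem_insert.mpr (Or.inl (card_eq_zero.mp h)))
      · obtain ⟨a, rfl⟩ := card_eq_one.mp h
        exact hs (mem_insert_of_mem (mem_image_of_mem _ (mem_univ a)))
    obtain ⟨i, hi, i', hi', hne⟩ := one_lt_card.mp hcard
    exact det_eq_zero_of_rows_smul_same hne
      ((s.piecewise_eq_of_mem _ _ hi).trans (hrow i))
      ((s.piecewise_eq_of_mem _ _ hi').trans (hrow i'))
  have hsingle : ∀ i, term {i} = u i * (A.updateRow i v).det := by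
    intro i
    rw [← det_updateRow_smul, ← hrow]
    exact congrArg det (piecewise_singleton (f := fun k => vecMulVec u v k) (g := A) i)
  rw [hexpand, ← sum_subset (subset_univ _) (fun s _ hs => hsmall s hs),
    sum_insert (by simp), sum_image (fun a _ b _ h => singleton_injective h)]
  simp only [hsingle]
  rfl

end

theorem mul_eq_mul_castSucc_add_vecMulVec_last {m n R : Type*} [NonUnitalNonAssocSemiring R]
    {ν : ℕ} (A : Matrix m (Fin (ν + 1)) R) (B : Matrix (Fin (ν + 1)) n R) :
    A * B = A.submatrix id Fin.castSucc * B.submatrix Fin.castSucc id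
      + vecMulVec (A.col (Fin.last ν)) (B (Fin.last ν)) := by
  ext i k
  simp [mul_apply, Fin.sum_univ_castSucc, vecMulVec_apply]

theorem rank_eq_of_col_castSucc_of_col_last_neg {m K : Type*} [Fintype m] [Field K] {ν : ℕ}
    {A : Matrix m (Fin (ν + 1)) K} {B : Matrix m (Fin ν) K} {j : Fin ν}
    (hcols : ∀ k, A.col k.castSucc = B.col k) (hlast : A.col (Fin.last ν) = -B.col j) :
    A.rank = B.rank := by
  rw [rank_eq_finrank_span_cols, rank_eq_finrank_span_cols, Submodule.span_eq_span]
  · rintro _ ⟨k, rfl⟩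
    induction k using Fin.lastCases with
    | last => exact hlast ▸ Submodule.neg_mem _ (Submodule.subset_span ⟨j, rfl⟩)
    | cast k => exact hcols k ▸ Submodule.subset_span ⟨k, rfl⟩
  · rintro _ ⟨k, rfl⟩
    exact hcols k ▸ Submodule.subset_span ⟨k.castSucc, rfl⟩

end Matrix

theorem principalMinor_add_smul_vecMulVec {n : ℕ} (A : Matrix (Fin n) (Fin n) ℝ)
    (u v : Fin n → ℝ) (I : Finset (Fin n)) :
    ∃ c, ∀ ε : ℝ, principalMinor (A + ε • vecMulVec u v) I = principalMinor A I + ε * c := by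
  set e : {x // x ∈ I} → Fin n := Subtype.val
  refine ⟨∑ a, u (e a) * ((A.submatrix e e).updateRow a (v ∘ e)).det, fun ε => ?_⟩
  have hsub : (A + ε • vecMulVec u v).submatrix e e
      = A.submatrix e e + vecMulVec ((ε • u) ∘ e) (v ∘ e) := by
    ext a b; simp [vecMulVec_apply, mul_assoc]
  rw [principalMinor, principalMinor, hsub, det_add_vecMulVec, mul_sum]
  simp only [Pi.smul_apply, Function.comp_apply, smul_eq_mul, mul_assoc]
  rfl

theorem sumMinors_add_smul_vecMulVec {n : ℕ} (r : ℕ) (A : Matrix (Fin n) (Fin n) ℝ)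
    (u v : Fin n → ℝ) :
    ∃ c, ∀ ε : ℝ, sumMinors r (A + ε • vecMulVec u v) = sumMinors r A + ε * c := by
  choose c hc using principalMinor_add_smul_vecMulVec A u v
  exact ⟨∑ I ∈ univ.powersetCard r, c I, fun ε => by
    simp only [sumMinors, hc, sum_add_distrib, mul_sum]⟩

theorem sumMinors_nonneg {n : ℕ} (r : ℕ) {M : Matrix (Fin n) (Fin n) ℝ}
    (h : ∀ I, 0 ≤ principalMinor M I) : 0 ≤ sumMinors r M :=
  sum_nonneg fun I _ => h I

theorem admissible_submatrix_castSucc {n ν : ℕ} {α : Matrix (Fin n) (Fin ν) ℕ}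
    {αt : Matrix (Fin n) (Fin (ν + 1)) ℕ} (hαt : ∀ i (k : Fin ν), αt i k.castSucc = α i k)
    {V : Matrix (Fin (ν + 1)) (Fin n) ℝ} (hV : admissible αt V) :
    admissible α (V.submatrix Fin.castSucc id) := by
  intro i k
  simpa [hαt] using hV i k.castSucc

theorem admissible_updateRow_smul {n ν : ℕ} {α : Matrix (Fin n) (Fin ν) ℕ}
    {V : Matrix (Fin ν) (Fin n) ℝ} (hV : admissible α V) (k : Fin ν) {ε : ℝ} (hε : 0 < ε) :
    admissible α (V.updateRow k (ε • V k)) := by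
  intro i l
  rcases eq_or_ne l k with rfl | hl
  · simpa [hε.ne', mul_pos_iff_of_pos_left hε] using hV i l
  · simpa [updateRow_ne hl] using hV i l

section Reversal

variable {n ν : ℕ} {α β : Matrix (Fin n) (Fin ν) ℕ} {αt βt : Matrix (Fin n) (Fin (ν + 1)) ℕ}

theorem gam_col_castSucc (hαt : ∀ i (k : Fin ν), αt i k.castSucc = α i k)
    (hβt : ∀ i (k : Fin ν), βt i k.castSucc = β i k) (k : Fin ν) :
    (gam αt βt).col k.castSucc = (gam α β).col k := by
  ext i; simp [gam, hαt, hβt]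

theorem gam_col_last {j : Fin ν} (hαtl : ∀ i, αt i (Fin.last ν) = β i j)
    (hβtl : ∀ i, βt i (Fin.last ν) = α i j) :
    (gam αt βt).col (Fin.last ν) = -(gam α β).col j := by
  ext i; simp [gam, hαtl, hβtl]

theorem neg_gam_mul_updateRow_last_smul {j : Fin ν}
    (hαt : ∀ i (k : Fin ν), αt i k.castSucc = α i k) (hαtl : ∀ i, αt i (Fin.last ν) = β i j)
    (hβt : ∀ i (k : Fin ν), βt i k.castSucc = β i k) (hβtl : ∀ i, βt i (Fin.last ν) = α i j)
    (V : Matrix (Fin (ν + 1)) (Fin n) ℝ) (ε : ℝ) :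
    -(gam αt βt * V.updateRow (Fin.last ν) (ε • V (Fin.last ν)))
      = -(gam α β * V.submatrix Fin.castSucc id)
        + ε • vecMulVec ((gam α β).col j) (V (Fin.last ν)) := by
  have hgam : (gam αt βt).submatrix id Fin.castSucc = gam α β := by
    ext i k; exact congrFun (gam_col_castSucc hαt hβt k) i
  have hV : (V.updateRow (Fin.last ν) (ε • V (Fin.last ν))).submatrix Fin.castSucc id
      = V.submatrix Fin.castSucc id := by
    ext k i; simp
  rw [mul_eq_mul_castSucc_add_vecMulVec_last, hgam, hV, gam_col_last hαtl hβtl, updateRow_self,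
    neg_vecMulVec, vecMulVec_smul, neg_add, neg_neg]

end Reversal

theorem nondeg_reversal_general (n ν : ℕ) (α β : Matrix (Fin n) (Fin ν) ℕ)
    (j : Fin ν)
    (αt βt : Matrix (Fin n) (Fin (ν + 1)) ℕ)
    (hαt : ∀ i (k : Fin ν), αt i k.castSucc = α i k)
    (hαtl : ∀ i, αt i (Fin.last ν) = β i j)
    (hβt : ∀ i (k : Fin ν), βt i k.castSucc = β i k)
    (hβtl : ∀ i, βt i (Fin.last ν) = α i j)
    (hP0 : ∀ V, admissible α V → ∀ I : Finset (Fin n),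
      0 ≤ principalMinor (-(gam α β * V)) I)
    (hND : ∀ V, admissible α V →
      sumMinors (gam α β).rank (-(gam α β * V)) ≠ 0)
    (hP0t : ∀ V, admissible αt V → ∀ I : Finset (Fin n),
      0 ≤ principalMinor (-(gam αt βt * V)) I) :
    ∀ V, admissible αt V →
      sumMinors (gam αt βt).rank (-(gam αt βt * V)) ≠ 0 := by
  intro V hV
  set r := (gam α β).rank
  set W : ℝ → Matrix (Fin (ν + 1)) (Fin n) ℝ :=
    fun ε => V.updateRow (Fin.last ν) (ε • V (Fin.last ν))
  have hrank : (gam αt βt).rank = r :=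
    rank_eq_of_col_castSucc_of_col_last_neg (gam_col_castSucc hαt hβt) (gam_col_last hαtl hβtl)
  have hW1 : W 1 = V := by simp [W, updateRow_eq_self]
  have hV₀ := admissible_submatrix_castSucc hαt hV
  obtain ⟨c, hc⟩ := sumMinors_add_smul_vecMulVec r (-(gam α β * V.submatrix Fin.castSucc id))
    ((gam α β).col j) (V (Fin.last ν))
  simp only [← neg_gam_mul_updateRow_last_smul hαt hαtl hβt hβtl] at hc
  have h0 : 0 < sumMinors r (-(gam α β * V.submatrix Fin.castSucc id)) :=
    (sumMinors_nonneg r (hP0 _ hV₀)).lt_of_ne' (hND _ hV₀)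
  have h2 : 0 ≤ sumMinors r (-(gam αt βt * W 2)) :=
    sumMinors_nonneg r (hP0t _ (admissible_updateRow_smul hV _ two_pos))
  rw [hrank, ← hW1]
  intro h1
  linarith [hc 1, hc 2]

/-- Robust non-degeneracy is preserved by the reversal of a reaction
(for robustly `P₀` networks without catalytic reactions). -/
theorem nondeg_reversal (n ν : ℕ) (α β : Matrix (Fin n) (Fin ν) ℕ)
    (hcat : ∀ i j, ¬(0 < α i j ∧ 0 < β i j))
    (j : Fin ν)
    (αt βt : Matrix (Fin n) (Fin (ν + 1)) ℕ)
    (hαt : ∀ i (k : Fin ν), αt i k.castSucc = α i k)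
    (hαtl : ∀ i, αt i (Fin.last ν) = β i j)
    (hβt : ∀ i (k : Fin ν), βt i k.castSucc = β i k)
    (hβtl : ∀ i, βt i (Fin.last ν) = α i j)
    (hP0 : ∀ V, admissible α V → ∀ I : Finset (Fin n),
      0 ≤ principalMinor (-(gam α β * V)) I)
    (hND : ∀ V, admissible α V →
      sumMinors (gam α β).rank (-(gam α β * V)) ≠ 0)
    (hP0t : ∀ V, admissible αt V → ∀ I : Finset (Fin n),
      0 ≤ principalMinor (-(gam αt βt * V)) I) :
    ∀ V, admissible αt V →
      sumMinors (gam αt βt).rank (-(gam αt βt * V)) ≠ 0 :=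
  nondeg_reversal_general n ν α β j αt βt hαt hαtl hβt hβtl hP0 hND hP0t
end

section
/- Let a reaction network N be given by α, β ∈ ℕ^{n×ν} with Γ = β − α, admissible Jacobian set 𝒦, and r = rank Γ. Assume N has no catalytic reactions (for all i, j, not both α_{ij} > 0 and β_{ij} > 0). Fix a reaction j and let Ñ be obtained from N by adding an intermediate species to reaction j: Ñ has n+1 species and ν+1 reactions with α̃, β̃ ∈ ℕ^{(n+1)×(ν+1)} defined by: column j of α̃ is column j of α extended by 0 in row n+1, and column j of β̃ is the vector with 1 in row n+1 and 0 elsewhere; column ν+1 of α̃ is the vector with 1 in row n+1 and 0 elsewhere, and column ν+1 of β̃ is column j of β extended by 0 in row n+1; every other column of α̃ (resp. β̃) equals the corresponding column of α (resp. β) extended by 0 in row n+1. Set Γ̃ = β̃ − α̃, r̃ = rank Γ̃, and let 𝒦̃ be the admissible Jacobian set of Ñ. Assume: N is robustly P0; N is robustly non-degenerate; and Ñ is robustly P0. Then Ñ is robustly non-degenerate: for every Ṽ ∈ 𝒦̃ the sum of all r̃×r̃ principal minors of −Γ̃Ṽ is nonzero. -/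
open Matrix Finset

/-!
Let `Ṽ` be admissible for `Ñ` and let `V` be its restriction to the old species and reactions,
which is admissible for `N`. As `N` is robustly `P₀` and non-degenerate, some `r × r` principal
minor of `-ΓV` is positive. The new species is consumed only by the new reaction, so bordering
that minor by the new species multiplies it by `Ṽ_{ν+1,n+1} > 0`. This gives a positive principal
minor of `-Γ̃Ṽ` of size `r + 1`, whence `rank Γ̃ ≥ r + 1`. Conversely `Γ̃` is `Γ` padded by zeros
plus a rank-one matrix, so `rank Γ̃ = r + 1`, and as `Ñ` is robustly `P₀` the sum of the
`(r + 1) × (r + 1)` principal minors of `-Γ̃Ṽ` is at least that positive minor.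
-/

namespace Matrix

variable {m n ι R : Type*}

theorem rank_add_le [Fintype n] [Field R] (A B : Matrix m n R) :
    (A + B).rank ≤ A.rank + B.rank := by
  rw [rank, rank, rank, mulVecLin_add]
  exact (Submodule.finrank_mono (LinearMap.range_add_le _ _)).trans
    (Submodule.finrank_add_le_finrank_add_finrank _ _)

theorem det_eq_mul_det_of_col_eq_mul [Fintype ι] [DecidableEq ι] [CommRing R]
    (A : Matrix (ι ⊕ Unit) (ι ⊕ Unit) R) (c : ι → R)
    (hc : ∀ i, A (.inl i) (.inr ()) = c i * A (.inr ()) (.inr ())) :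
    A.det = A (.inr ()) (.inr ()) *
      (of fun i i' => A (.inl i) (.inl i') - c i * A (.inr ()) (.inl i')).det := by
  -- subtracting `c i` times the last row from row `i` makes `A` block lower triangular
  rw [det_eq_of_forall_row_eq_smul_add_const (Sum.elim c 0) (.inr ()) rfl
    (B := fromBlocks (of fun i i' => A (.inl i) (.inl i') - c i * A (.inr ()) (.inl i')) 0
      (of fun _ i' => A (.inr ()) (.inl i')) (of fun _ _ => A (.inr ()) (.inr ())))]
  · rw [det_fromBlocks_zero₁₂, det_unique (of fun _ _ : Unit => A (.inr ()) (.inr ())), mul_comm]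
    rfl
  · rintro (i | ⟨⟩) (i' | ⟨⟩) <;> simp [hc]

end Matrix

variable {m n : ℕ}

section padLast

variable {R : Type*}

def padLast [Zero R] (M : Matrix (Fin m) (Fin n) R) : Matrix (Fin (m + 1)) (Fin (n + 1)) R :=
  of (Fin.snoc (fun i => Fin.snoc (M i) 0) 0)

@[simp] theorem padLast_castSucc_castSucc [Zero R] (M : Matrix (Fin m) (Fin n) R)
    (i : Fin m) (k : Fin n) : padLast M i.castSucc k.castSucc = M i k := by
  simp [padLast]

@[simp] theorem padLast_last_left [Zero R] (M : Matrix (Fin m) (Fin n) R) (b : Fin (n + 1)) :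
    padLast M (Fin.last m) b = 0 := by
  simp [padLast]

@[simp] theorem padLast_last_right [Zero R] (M : Matrix (Fin m) (Fin n) R) (a : Fin (m + 1)) :
    padLast M a (Fin.last n) = 0 := by
  induction a using Fin.lastCases <;> simp [padLast]

theorem rank_padLast_le [CommRing R] [StrongRankCondition R] (M : Matrix (Fin m) (Fin n) R) :
    (padLast M).rank ≤ M.rank := by
  let E : ∀ p, Matrix (Fin (p + 1)) (Fin p) R :=
    fun p => of fun a i => if i.castSucc = a then 1 else 0
  have h : padLast M = E m * M * (E n)ᵀ := by
    ext a b
    induction a using Fin.lastCases <;> induction b using Fin.lastCases <;>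
      simp [E, mul_apply]
  rw [h]
  exact (rank_mul_le_left _ _).trans (rank_mul_le_right _ _)

end padLast

theorem principalMinor_map_univ {κ : Type*} [Fintype κ] [DecidableEq κ]
    (M : Matrix (Fin m) (Fin m) ℝ) (f : κ ↪ Fin m) :
    principalMinor M (univ.map f) = (M.submatrix f f).det := by
  let e : κ ≃ {x // x ∈ univ.map f} := Equiv.ofBijective
    (fun k => ⟨f k, mem_map_of_mem f (mem_univ k)⟩)
    ⟨fun _ _ h => f.injective (congrArg Subtype.val h), fun ⟨_, hx⟩ => by
      obtain ⟨k, -, rfl⟩ := mem_map.1 hx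
      exact ⟨k, rfl⟩⟩
  rw [principalMinor, ← det_submatrix_equiv_self e]
  rfl

theorem card_le_rank_of_principalMinor_ne_zero (M : Matrix (Fin m) (Fin m) ℝ)
    {S : Finset (Fin m)} (h : principalMinor M S ≠ 0) : S.card ≤ M.rank := by
  have := rank_of_det_ne_zero h
  rw [Fintype.card_coe] at this
  exact this ▸ rank_submatrix_le M _ _

theorem principalMinor_insert_last (M : Matrix (Fin (n + 1)) (Fin (n + 1)) ℝ) (c : Fin n → ℝ)
    (hc : ∀ i, M i.castSucc (Fin.last n) = c i * M (Fin.last n) (Fin.last n))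
    (I : Finset (Fin n)) :
    principalMinor M (insert (Fin.last n) (I.map Fin.castSuccEmb)) =
      M (Fin.last n) (Fin.last n) *
        principalMinor (of fun i i' => M i.castSucc i'.castSucc - c i * M (Fin.last n) i'.castSucc)
          I := by
  let f : {x // x ∈ I} ⊕ Unit ↪ Fin (n + 1) :=
    ⟨Sum.elim (fun i => (i : Fin n).castSucc) fun _ => Fin.last n,
      ((Fin.castSucc_injective n).comp Subtype.val_injective).sumElim (fun _ _ _ => rfl)
        fun _ _ => Fin.castSucc_ne_last _⟩
  have hS : insert (Fin.last n) (I.map Fin.castSuccEmb) = univ.map f := by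
    ext x
    induction x using Fin.lastCases <;> simp [f, fun i : Fin n => (Fin.castSucc_lt_last i).ne']
  rw [hS, principalMinor_map_univ]
  exact det_eq_mul_det_of_col_eq_mul (M.submatrix f f) (fun i => c i) fun i => hc i

theorem principalMinor_neg_padLast_add_vecMulVec_mul {ν : ℕ} (G : Matrix (Fin n) (Fin ν) ℝ)
    (w : Fin (n + 1) → ℝ) (c : Fin (ν + 1) → ℝ) (hw : w (Fin.last n) = -1)
    (hc : c (Fin.last ν) = 1) (V : Matrix (Fin (ν + 1)) (Fin (n + 1)) ℝ)
    (hV : ∀ k : Fin ν, V k.castSucc (Fin.last n) = 0) (I : Finset (Fin n)) :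
    principalMinor (-((padLast G + vecMulVec w c) * V))
        (insert (Fin.last n) (I.map Fin.castSuccEmb)) =
      V (Fin.last ν) (Fin.last n) *
        principalMinor (-(G * V.submatrix Fin.castSucc Fin.castSucc)) I := by
  have hpad : ∀ a b,
      (padLast G * V) a b = ∑ k : Fin ν, padLast G a k.castSucc * V k.castSucc b := by
    intro a b
    simp [mul_apply, Fin.sum_univ_castSucc]
  have hcV : (c ᵥ* V) (Fin.last n) = V (Fin.last ν) (Fin.last n) := by
    simp [vecMul, dotProduct, Fin.sum_univ_castSucc, hV, hc]
  have hM : (padLast G + vecMulVec w c) * V = padLast G * V + vecMulVec w (c ᵥ* V) := by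
    rw [Matrix.add_mul, vecMulVec_mul]
  set M := -(padLast G * V + vecMulVec w (c ᵥ* V))
  have hlast : M (Fin.last n) (Fin.last n) = V (Fin.last ν) (Fin.last n) := by
    simp [M, hpad, vecMulVec_apply, hw, hcV]
  have hcol : ∀ i : Fin n,
      M i.castSucc (Fin.last n) = -w i.castSucc * M (Fin.last n) (Fin.last n) := by
    simp [M, hpad, vecMulVec_apply, hV, hcV, hw]
  rw [hM, principalMinor_insert_last M _ hcol, hlast]
  congr 2
  ext i i'
  simp [M, hpad, vecMulVec_apply, hw, mul_apply]

theorem exists_card_eq_principalMinor_pos {M : Matrix (Fin m) (Fin m) ℝ} {r : ℕ}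
    (hP0 : ∀ I, 0 ≤ principalMinor M I) (h : sumMinors r M ≠ 0) :
    ∃ I : Finset (Fin m), I.card = r ∧ 0 < principalMinor M I := by
  obtain ⟨I, hI, hne⟩ := exists_ne_zero_of_sum_ne_zero h
  exact ⟨I, mem_powersetCard_univ.1 hI, (hP0 I).lt_of_ne' hne⟩

theorem sumMinors_pos {M : Matrix (Fin m) (Fin m) ℝ} {S : Finset (Fin m)}
    (hP0 : ∀ I, 0 ≤ principalMinor M I) (hpos : 0 < principalMinor M S) :
    0 < sumMinors S.card M :=
  hpos.trans_le <| single_le_sum (fun I _ => hP0 I) (mem_powersetCard_univ.2 rfl)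

/-- Reaction `j` of `N` now produces only the new species `Fin.last n`, which the new reaction
`Fin.last ν` converts into the former products of `j`. -/
structure IsIntermediateExtension {ν : ℕ} (α β : Matrix (Fin n) (Fin ν) ℕ) (j : Fin ν)
    (αt βt : Matrix (Fin (n + 1)) (Fin (ν + 1)) ℕ) : Prop where
  reactant_j : ∀ i : Fin n, αt i.castSucc j.castSucc = α i j
  reactant_j_last : αt (Fin.last n) j.castSucc = 0
  product_j : ∀ i : Fin n, βt i.castSucc j.castSucc = 0
  product_j_last : βt (Fin.last n) j.castSucc = 1
  reactant_new : ∀ i : Fin n, αt i.castSucc (Fin.last ν) = 0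
  reactant_new_last : αt (Fin.last n) (Fin.last ν) = 1
  product_new : ∀ i : Fin n, βt i.castSucc (Fin.last ν) = β i j
  product_new_last : βt (Fin.last n) (Fin.last ν) = 0
  other : ∀ (i : Fin n) (k : Fin ν), k ≠ j →
    αt i.castSucc k.castSucc = α i k ∧ βt i.castSucc k.castSucc = β i k
  other_last : ∀ k : Fin ν, k ≠ j → αt (Fin.last n) k.castSucc = 0 ∧ βt (Fin.last n) k.castSucc = 0

namespace IsIntermediateExtension

variable {ν : ℕ} {α β : Matrix (Fin n) (Fin ν) ℕ} {j : Fin ν}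
  {αt βt : Matrix (Fin (n + 1)) (Fin (ν + 1)) ℕ}

/-- Adding the new last column of `Γ̃` to column `j` gives `Γ` padded by zeros, so `Γ̃` is that
padding plus a rank-one correction. -/
theorem gam_eq (h : IsIntermediateExtension α β j αt βt) :
    gam αt βt = padLast (gam α β) +
      vecMulVec (Fin.snoc (fun i => (β i j : ℝ)) (-1))
        (Pi.single (Fin.last ν) 1 - Pi.single j.castSucc 1) := by
  ext a b
  induction a using Fin.lastCases with
  | last =>
    induction b using Fin.lastCases with
    | last => simp [gam, vecMulVec_apply, h.reactant_new_last, h.product_new_last]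
    | cast k =>
      by_cases hk : k = j
      · subst hk
        simp [gam, vecMulVec_apply, h.reactant_j_last, h.product_j_last]
      · simp [gam, vecMulVec_apply, h.other_last k hk, hk]
  | cast i =>
    induction b using Fin.lastCases with
    | last => simp [gam, vecMulVec_apply, h.reactant_new i, h.product_new i]
    | cast k =>
      by_cases hk : k = j
      · subst hk
        simp [gam, vecMulVec_apply, h.reactant_j i, h.product_j i]
        ring
      · simp [gam, vecMulVec_apply, h.other i k hk, hk]

theorem rank_gam_le (h : IsIntermediateExtension α β j αt βt) :
    (gam αt βt).rank ≤ (gam α β).rank + 1 := by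
  rw [h.gam_eq]
  exact (rank_add_le _ _).trans (add_le_add (rank_padLast_le _) (rank_vecMulVec_le _ _))

variable {V : Matrix (Fin (ν + 1)) (Fin (n + 1)) ℝ}

theorem admissible_submatrix (h : IsIntermediateExtension α β j αt βt) (hV : admissible αt V) :
    admissible α (V.submatrix Fin.castSucc Fin.castSucc) := by
  intro i k
  by_cases hk : k = j
  · subst hk
    simpa [h.reactant_j i] using hV i.castSucc k.castSucc
  · simpa [(h.other i k hk).1] using hV i.castSucc k.castSucc

theorem apply_castSucc_last (h : IsIntermediateExtension α β j αt βt) (hV : admissible αt V)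
    (k : Fin ν) : V k.castSucc (Fin.last n) = 0 := by
  by_cases hk : k = j
  · subst hk
    exact (hV _ _).2 h.reactant_j_last
  · exact (hV _ _).2 (h.other_last k hk).1

theorem apply_last_last_pos (h : IsIntermediateExtension α β j αt βt) (hV : admissible αt V) :
    0 < V (Fin.last ν) (Fin.last n) :=
  (hV _ _).1 (by rw [h.reactant_new_last]; exact one_pos)

end IsIntermediateExtension

theorem nondeg_intermediate_general (n ν : ℕ) (α β : Matrix (Fin n) (Fin ν) ℕ)
    (j : Fin ν)
    (αt βt : Matrix (Fin (n + 1)) (Fin (ν + 1)) ℕ)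
    (hαj : ∀ i : Fin n, αt i.castSucc j.castSucc = α i j)
    (hαjl : αt (Fin.last n) j.castSucc = 0)
    (hβj : ∀ i : Fin n, βt i.castSucc j.castSucc = 0)
    (hβjl : βt (Fin.last n) j.castSucc = 1)
    (hαnew : ∀ i : Fin n, αt i.castSucc (Fin.last ν) = 0)
    (hαnewl : αt (Fin.last n) (Fin.last ν) = 1)
    (hβnew : ∀ i : Fin n, βt i.castSucc (Fin.last ν) = β i j)
    (hβnewl : βt (Fin.last n) (Fin.last ν) = 0)
    (hother : ∀ (i : Fin n) (k : Fin ν), k ≠ j →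
      αt i.castSucc k.castSucc = α i k ∧ βt i.castSucc k.castSucc = β i k)
    (hotherl : ∀ k : Fin ν, k ≠ j →
      αt (Fin.last n) k.castSucc = 0 ∧ βt (Fin.last n) k.castSucc = 0)
    (hP0 : ∀ V, admissible α V → ∀ I : Finset (Fin n),
      0 ≤ principalMinor (-(gam α β * V)) I)
    (hND : ∀ V, admissible α V →
      sumMinors (gam α β).rank (-(gam α β * V)) ≠ 0)
    (hP0t : ∀ V, admissible αt V → ∀ I : Finset (Fin (n + 1)),
      0 ≤ principalMinor (-(gam αt βt * V)) I) :
    ∀ V, admissible αt V →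
      sumMinors (gam αt βt).rank (-(gam αt βt * V)) ≠ 0 := by
  intro Vt hVt
  have hN : IsIntermediateExtension α β j αt βt :=
    ⟨hαj, hαjl, hβj, hβjl, hαnew, hαnewl, hβnew, hβnewl, hother, hotherl⟩
  have hV := hN.admissible_submatrix hVt
  obtain ⟨I, hIcard, hIpos⟩ := exists_card_eq_principalMinor_pos (hP0 _ hV) (hND _ hV)
  set S := insert (Fin.last n) (I.map Fin.castSuccEmb)
  have hScard : S.card = (gam α β).rank + 1 := by
    rw [card_insert_of_notMem (by simp [Fin.castSucc_ne_last]), card_map, hIcard]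
  have hSpos : 0 < principalMinor (-(gam αt βt * Vt)) S := by
    rw [hN.gam_eq, principalMinor_neg_padLast_add_vecMulVec_mul _ _ _ (by simp) (by simp) Vt
      (hN.apply_castSucc_last hVt)]
    exact mul_pos (hN.apply_last_last_pos hVt) hIpos
  have hrank : (gam αt βt).rank = S.card := by
    refine le_antisymm (hScard ▸ hN.rank_gam_le) ?_
    calc S.card ≤ (-(gam αt βt * Vt)).rank := card_le_rank_of_principalMinor_ne_zero _ hSpos.ne'
      _ ≤ (gam αt βt).rank := by rw [← Matrix.mul_neg]; exact rank_mul_le_left _ _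
  rw [hrank]
  exact (sumMinors_pos (hP0t Vt hVt) hSpos).ne'

/-- Robust non-degeneracy is preserved by the addition of an intermediate species
to a reaction (for robustly `P₀` networks without catalytic reactions). -/
theorem nondeg_intermediate (n ν : ℕ) (α β : Matrix (Fin n) (Fin ν) ℕ)
    (hcat : ∀ i j, ¬(0 < α i j ∧ 0 < β i j))
    (j : Fin ν)
    (αt βt : Matrix (Fin (n + 1)) (Fin (ν + 1)) ℕ)
    (hαj : ∀ i : Fin n, αt i.castSucc j.castSucc = α i j)
    (hαjl : αt (Fin.last n) j.castSucc = 0)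
    (hβj : ∀ i : Fin n, βt i.castSucc j.castSucc = 0)
    (hβjl : βt (Fin.last n) j.castSucc = 1)
    (hαnew : ∀ i : Fin n, αt i.castSucc (Fin.last ν) = 0)
    (hαnewl : αt (Fin.last n) (Fin.last ν) = 1)
    (hβnew : ∀ i : Fin n, βt i.castSucc (Fin.last ν) = β i j)
    (hβnewl : βt (Fin.last n) (Fin.last ν) = 0)
    (hother : ∀ (i : Fin n) (k : Fin ν), k ≠ j →
      αt i.castSucc k.castSucc = α i k ∧ βt i.castSucc k.castSucc = β i k)
    (hotherl : ∀ k : Fin ν, k ≠ j →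
      αt (Fin.last n) k.castSucc = 0 ∧ βt (Fin.last n) k.castSucc = 0)
    (hP0 : ∀ V, admissible α V → ∀ I : Finset (Fin n),
      0 ≤ principalMinor (-(gam α β * V)) I)
    (hND : ∀ V, admissible α V →
      sumMinors (gam α β).rank (-(gam α β * V)) ≠ 0)
    (hP0t : ∀ V, admissible αt V → ∀ I : Finset (Fin (n + 1)),
      0 ≤ principalMinor (-(gam αt βt * V)) I) :
    ∀ V, admissible αt V →
      sumMinors (gam αt βt).rank (-(gam αt βt * V)) ≠ 0 :=
  nondeg_intermediate_general n ν α β j αt βt hαj hαjl hβj hβjl hαnew hαnewl hβnew hβnewl hother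
    hotherl hP0 hND hP0t
end

section
/- Let a reaction network N be given by α, β ∈ ℕ^{n×ν} with Γ = β − α, admissible Jacobian set 𝒦, and r = rank Γ. Assume N has no catalytic reactions (for all i, j, not both α_{ij} > 0 and β_{ij} > 0). Fix a species i and let Ñ be obtained from N by adding a dimer X_i⁺: Ñ has n+1 species and the same ν reactions, where rows 1,…,n of α̃ and β̃ equal those of α and β, row n+1 of α̃ equals row i of α, and row n+1 of β̃ equals row i of β. Set Γ̃ = β̃ − α̃, r̃ = rank Γ̃, and let 𝒦̃ be the admissible Jacobian set of Ñ. Assume: N is robustly P0; N is robustly non-degenerate; and Ñ is robustly P0. Then Ñ is robustly non-degenerate: for every Ṽ ∈ 𝒦̃ the sum of all r̃×r̃ principal minors of −Γ̃Ṽ is nonzero. -/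
/-!
Adding the dimer `X i⁺` is the lumping of species along the surjection `p : Fin (n + 1) → Fin n`
sending `X i⁺` to `X i`: with the 0/1 matrix `P x i = [p x = i]` one has `Γ̃ = P Γ`, hence
`rank Γ̃ = rank Γ`. The sum of the `k × k` principal minors of `A B` is the `k`-th coefficient of
`det (1 + t A B) = det (1 + t B A)` (Weinstein–Aronszajn), so the sums of principal minors of
`-Γ̃ Ṽ = P (-Γ Ṽ)` and of `-Γ (Ṽ P)` agree. Finally `Ṽ P`, which adds the column of `X i⁺` to that
of `X i`, is admissible for `N`, so the robust non-degeneracy of `N` applies.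
-/

open Matrix Finset

open Polynomial in
theorem sumMinors_eq_coeff_det_one_add_X_smul {n : ℕ} (r : ℕ) (M : Matrix (Fin n) (Fin n) ℝ) :
    sumMinors r M = (det (1 + (X : ℝ[X]) • M.map C)).coeff r :=
  (coeff_det_one_add_X_smul_eq_sum_minors M r).symm

open Polynomial in
theorem sumMinors_mul_comm {m k : ℕ} (r : ℕ) (A : Matrix (Fin m) (Fin k) ℝ)
    (B : Matrix (Fin k) (Fin m) ℝ) : sumMinors r (A * B) = sumMinors r (B * A) := by
  rw [sumMinors_eq_coeff_det_one_add_X_smul, sumMinors_eq_coeff_det_one_add_X_smul,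
    Matrix.map_mul, Matrix.map_mul, ← smul_mul, det_one_add_mul_comm, Matrix.mul_smul]

theorem rank_submatrix_id_of_surjective {m n o R : Type*} [Fintype n] [CommSemiring R]
    [StrongRankCondition R] (A : Matrix m n R) {p : o → m} (hp : p.Surjective) :
    (A.submatrix p id).rank = A.rank := by
  refine (rank_submatrix_le A p id).antisymm ?_
  calc A.rank = ((A.submatrix p id).submatrix (Function.surjInv hp) id).rank := by
        rw [submatrix_submatrix, (Function.rightInverse_surjInv hp).comp_eq_id, Function.comp_id,
          submatrix_id_id]
    _ ≤ _ := rank_submatrix_le _ _ _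

section Lumping

variable {m n ν : ℕ}

theorem mul_one_submatrix_apply (V : Matrix (Fin ν) (Fin m) ℝ) (p : Fin m → Fin n)
    (j : Fin ν) (i : Fin n) :
    (V * (1 : Matrix (Fin n) (Fin n) ℝ).submatrix p id) j i = ∑ x with p x = i, V j x := by
  simp [mul_apply, one_apply, Finset.sum_filter]

theorem admissible_mul_one_submatrix {α : Matrix (Fin n) (Fin ν) ℕ}
    {V : Matrix (Fin ν) (Fin m) ℝ} {p : Fin m → Fin n} (hp : p.Surjective)
    (hV : admissible (α.submatrix p id) V) :
    admissible α (V * (1 : Matrix (Fin n) (Fin n) ℝ).submatrix p id) := by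
  intro i j
  rw [mul_one_submatrix_apply]
  obtain ⟨x, rfl⟩ := hp i
  refine ⟨fun hpos => Finset.sum_pos (fun y hy => ?_) ⟨x, by simp⟩,
    fun hzero => Finset.sum_eq_zero fun y hy => ?_⟩
  · exact (hV y j).1 (by simpa [(Finset.mem_filter.mp hy).2] using hpos)
  · exact (hV y j).2 (by simpa [(Finset.mem_filter.mp hy).2] using hzero)

theorem sumMinors_neg_submatrix_mul (r : ℕ) (Γ : Matrix (Fin n) (Fin ν) ℝ)
    (p : Fin m → Fin n) (V : Matrix (Fin ν) (Fin m) ℝ) :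
    sumMinors r (-(Γ.submatrix p id * V)) =
      sumMinors r (-(Γ * (V * (1 : Matrix (Fin n) (Fin n) ℝ).submatrix p id))) := by
  have hΓ : Γ.submatrix p id = (1 : Matrix (Fin n) (Fin n) ℝ).submatrix p id * Γ := by
    simpa using submatrix_mul 1 Γ p id id Function.bijective_id
  rw [hΓ, Matrix.mul_assoc, ← Matrix.mul_neg, sumMinors_mul_comm, Matrix.neg_mul,
    Matrix.mul_assoc]

def RobustlyNondegenerate (α β : Matrix (Fin n) (Fin ν) ℕ) : Prop :=
  ∀ V, admissible α V → sumMinors (gam α β).rank (-(gam α β * V)) ≠ 0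

theorem RobustlyNondegenerate.submatrix {α β : Matrix (Fin n) (Fin ν) ℕ}
    (h : RobustlyNondegenerate α β) {p : Fin m → Fin n} (hp : p.Surjective) :
    RobustlyNondegenerate (α.submatrix p id) (β.submatrix p id) := by
  intro V hV
  have hgam : gam (α.submatrix p id) (β.submatrix p id) = (gam α β).submatrix p id := rfl
  rw [hgam, rank_submatrix_id_of_surjective _ hp, sumMinors_neg_submatrix_mul]
  exact h _ (admissible_mul_one_submatrix hp hV)

end Lumping

theorem submatrix_snoc_eq {n : ℕ} {ι X : Type*} {M : Matrix (Fin n) ι X}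
    {Mt : Matrix (Fin (n + 1)) ι X} (i0 : Fin n) (hold : ∀ i j, Mt i.castSucc j = M i j)
    (hnew : ∀ j, Mt (Fin.last n) j = M i0 j) :
    M.submatrix (Fin.snoc id i0) id = Mt := by
  ext x j
  induction x using Fin.lastCases <;> simp [hold, hnew]

theorem nondeg_add_dimer_general (n ν : ℕ) (α β : Matrix (Fin n) (Fin ν) ℕ)
    (i0 : Fin n)
    (αt βt : Matrix (Fin (n + 1)) (Fin ν) ℕ)
    (hαold : ∀ (i : Fin n) (j : Fin ν), αt i.castSucc j = α i j)
    (hβold : ∀ (i : Fin n) (j : Fin ν), βt i.castSucc j = β i j)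
    (hαnew : ∀ j : Fin ν, αt (Fin.last n) j = α i0 j)
    (hβnew : ∀ j : Fin ν, βt (Fin.last n) j = β i0 j)
    (hND : ∀ V, admissible α V →
      sumMinors (gam α β).rank (-(gam α β * V)) ≠ 0) :
    ∀ V, admissible αt V →
      sumMinors (gam αt βt).rank (-(gam αt βt * V)) ≠ 0 := by
  have hsurj : (Fin.snoc id i0 : Fin (n + 1) → Fin n).Surjective :=
    fun i => ⟨i.castSucc, Fin.snoc_castSucc ..⟩
  rw [← submatrix_snoc_eq i0 hαold hαnew, ← submatrix_snoc_eq i0 hβold hβnew]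
  exact RobustlyNondegenerate.submatrix hND hsurj

/-- Robust non-degeneracy is preserved by adding a dimer species `X i⁺`
(a reactant/product exactly where `X i` is), for robustly `P₀` networks
without catalytic reactions. -/
theorem nondeg_add_dimer (n ν : ℕ) (α β : Matrix (Fin n) (Fin ν) ℕ)
    (hcat : ∀ i j, ¬(0 < α i j ∧ 0 < β i j))
    (i0 : Fin n)
    (αt βt : Matrix (Fin (n + 1)) (Fin ν) ℕ)
    (hαold : ∀ (i : Fin n) (j : Fin ν), αt i.castSucc j = α i j)
    (hβold : ∀ (i : Fin n) (j : Fin ν), βt i.castSucc j = β i j)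
    (hαnew : ∀ j : Fin ν, αt (Fin.last n) j = α i0 j)
    (hβnew : ∀ j : Fin ν, βt (Fin.last n) j = β i0 j)
    (hP0 : ∀ V, admissible α V → ∀ I : Finset (Fin n),
      0 ≤ principalMinor (-(gam α β * V)) I)
    (hND : ∀ V, admissible α V →
      sumMinors (gam α β).rank (-(gam α β * V)) ≠ 0)
    (hP0t : ∀ V, admissible αt V → ∀ I : Finset (Fin (n + 1)),
      0 ≤ principalMinor (-(gam αt βt * V)) I) :
    ∀ V, admissible αt V →
      sumMinors (gam αt βt).rank (-(gam αt βt * V)) ≠ 0 :=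
  nondeg_add_dimer_general n ν α β i0 αt βt hαold hβold hαnew hβnew hND
end

section
/- Let a reaction network N be given by α, β ∈ ℕ^{n×ν} with Γ = β − α, and assume N has no catalytic reactions (for all i, j, not both α_{ij} > 0 and β_{ij} > 0). Let Ñ be obtained from N by reversing a reaction j: α̃ agrees with α on the first ν columns and its column ν+1 equals column j of β, while β̃ agrees with β on the first ν columns and its column ν+1 equals column j of α; set Γ̃ = β̃ − α̃. If N has no critical siphons, then Ñ has no critical siphons. -/
open Matrix Finset

/-- `P` is a siphon: it is nonempty, and every input reaction of a species in `P`
    is an output reaction of some species in `P`. -/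
def isSiphon {n ν : ℕ} (α β : Matrix (Fin n) (Fin ν) ℕ) (P : Finset (Fin n)) : Prop :=
  P.Nonempty ∧ ∀ j : Fin ν, (∃ i ∈ P, 0 < β i j) → ∃ i' ∈ P, 0 < α i' j

/-- `P` is trivial: `P` contains the support of a (nonzero, nonnegative)
    conservation law `d`, i.e. `dᵀ Γ = 0`. -/
def containsConsLaw {n ν : ℕ} (α β : Matrix (Fin n) (Fin ν) ℕ) (P : Finset (Fin n)) : Prop :=
  ∃ d : Fin n → ℝ, d ≠ 0 ∧ (∀ i, 0 ≤ d i) ∧ (∀ j, ∑ i, d i * gam α β i j = 0) ∧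
    ∀ i, 0 < d i → i ∈ P

/-- The network has no critical siphons: every siphon is trivial. -/
def noCriticalSiphons {n ν : ℕ} (α β : Matrix (Fin n) (Fin ν) ℕ) : Prop :=
  ∀ P : Finset (Fin n), isSiphon α β P → containsConsLaw α β P

/-- The absence of critical siphons is preserved by the reversal of a reaction
(for networks without catalytic reactions). -/
theorem siphons_reversal (n ν : ℕ) (α β : Matrix (Fin n) (Fin ν) ℕ)
    (hcat : ∀ i j, ¬(0 < α i j ∧ 0 < β i j))
    (j : Fin ν)
    (αt βt : Matrix (Fin n) (Fin (ν + 1)) ℕ)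
    (hαt : ∀ i (k : Fin ν), αt i k.castSucc = α i k)
    (hαtl : ∀ i, αt i (Fin.last ν) = β i j)
    (hβt : ∀ i (k : Fin ν), βt i k.castSucc = β i k)
    (hβtl : ∀ i, βt i (Fin.last ν) = α i j)
    (hN : noCriticalSiphons α β) :
    noCriticalSiphons αt βt := by
  intro P hP
  obtain ⟨hPne, hPs⟩ := hP
  have hPN : isSiphon α β P := by
    refine ⟨hPne, fun k hk => ?_⟩
    obtain ⟨i, hi, hβ⟩ := hk
    obtain ⟨i', hi', h⟩ := hPs k.castSucc ⟨i, hi, by rw [hβt]; exact hβ⟩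
    exact ⟨i', hi', by rwa [hαt] at h⟩
  obtain ⟨d, hd0, hdnn, hdΓ, hds⟩ := hN P hPN
  refine ⟨d, hd0, hdnn, ?_, hds⟩
  intro k
  refine Fin.lastCases ?_ ?_ k
  · have hj := hdΓ j
    simp only [gam] at hj ⊢
    simp only [hαtl, hβtl]
    have : ∑ i, d i * ((α i j : ℝ) - (β i j : ℝ))
        = -∑ i, d i * ((β i j : ℝ) - (α i j : ℝ)) := by
      rw [← Finset.sum_neg_distrib]
      exact Finset.sum_congr rfl (fun i _ => by ring)
    rw [this, hj, neg_zero]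
  · intro k'
    have hk' := hdΓ k'
    simp only [gam] at hk' ⊢
    simpa only [hαt, hβt] using hk'
end

section
/- Let a reaction network N be given by α, β ∈ ℕ^{n×ν} with Γ = β − α, and assume N has no catalytic reactions (for all i, j, not both α_{ij} > 0 and β_{ij} > 0). Fix a species k and let Ñ be obtained from N by external regulation of X_k: Ñ has the same n species and ν+2 reactions, where α̃ agrees with α on the first ν columns, column ν+1 of α̃ is the standard basis vector e_k and column ν+2 of α̃ is zero, while β̃ agrees with β on the first ν columns, column ν+1 of β̃ is zero and column ν+2 of β̃ is e_k; set Γ̃ = β̃ − α̃. If N has no critical siphons, then Ñ has no critical siphons. -/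
open Matrix Finset

/-- The absence of critical siphons is preserved by external regulation of a
species (adding `X k → ∅` and `∅ → X k`), for networks without catalytic
reactions. -/
theorem siphons_external_regulation (n ν : ℕ) (α β : Matrix (Fin n) (Fin ν) ℕ)
    (hcat : ∀ i j, ¬(0 < α i j ∧ 0 < β i j))
    (k : Fin n)
    (αt βt : Matrix (Fin n) (Fin (ν + 2)) ℕ)
    (hαold : ∀ i (l : Fin ν), αt i l.castSucc.castSucc = α i l)
    (hβold : ∀ i (l : Fin ν), βt i l.castSucc.castSucc = β i l)
    (hαout : ∀ i, αt i (Fin.last ν).castSucc = if i = k then 1 else 0)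
    (hβout : ∀ i, βt i (Fin.last ν).castSucc = 0)
    (hαin : ∀ i, αt i (Fin.last (ν + 1)) = 0)
    (hβin : ∀ i, βt i (Fin.last (ν + 1)) = if i = k then 1 else 0)
    (hN : noCriticalSiphons α β) :
    noCriticalSiphons αt βt := by
  intro P hP
  obtain ⟨hPne, hPs⟩ := hP
  have hk : k ∉ P := by
    intro hkP
    obtain ⟨i', hi'P, hi'⟩ := hPs (Fin.last (ν + 1)) ⟨k, hkP, by simp [hβin]⟩
    simp [hαin] at hi'
  have hPsi : isSiphon α β P := by
    refine ⟨hPne, fun j hj => ?_⟩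
    obtain ⟨i, hiP, hib⟩ := hj
    obtain ⟨i', hi'P, hi'⟩ := hPs j.castSucc.castSucc ⟨i, hiP, by rw [hβold]; exact hib⟩
    exact ⟨i', hi'P, by rwa [hαold] at hi'⟩
  obtain ⟨d, hd0, hdnn, hdcons, hdsupp⟩ := hN P hPsi
  have hdk : d k = 0 := by
    rcases lt_or_eq_of_le (hdnn k) with h | h
    · exact absurd (hdsupp k h) hk
    · exact h.symm
  refine ⟨d, hd0, hdnn, fun j => ?_, hdsupp⟩
  refine Fin.lastCases ?_ (fun j' => ?_) j
  · have hg : ∀ i, gam αt βt i (Fin.last (ν + 1)) = if i = k then 1 else 0 := by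
      intro i; by_cases h : i = k <;> simp [gam, hαin, hβin, h]
    simp only [hg]
    rw [Finset.sum_eq_single k]
    · simp [hdk]
    · intro b _ hb; simp [hb]
    · simp
  · refine Fin.lastCases ?_ (fun l => ?_) j'
    · have hg : ∀ i, gam αt βt i (Fin.last ν).castSucc = if i = k then -1 else 0 := by
        intro i; by_cases h : i = k <;> simp [gam, hαout, hβout, h]
      simp only [hg]
      rw [Finset.sum_eq_single k]
      · simp [hdk]
      · intro b _ hb; simp [hb]
      · simp
    · have hg : ∀ i, gam αt βt i l.castSucc.castSucc = gam α β i l := by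
        intro i; simp [gam, hαold, hβold]
      simp only [hg]
      exact hdcons l
end

section
/- Let a reaction network N be given by α, β ∈ ℕ^{n×ν} with Γ = β − α, and assume N has no catalytic reactions (for all i, j, not both α_{ij} > 0 and β_{ij} > 0). Fix a species k and let Ñ be obtained from N by conserved regulation of X_k: Ñ has n+1 species and ν+2 reactions, where the first ν columns of α̃ (resp. β̃) are the columns of α (resp. β) extended by 0 in row n+1; column ν+1 of α̃ is e_k and column ν+1 of β̃ is e_{n+1}; column ν+2 of α̃ is e_{n+1} and column ν+2 of β̃ is e_k (i.e., the reactions X_k → X_{n+1} and X_{n+1} → X_k are added); set Γ̃ = β̃ − α̃. If N has no critical siphons, then Ñ has no critical siphons. -/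
open Matrix Finset

/-- The absence of critical siphons is preserved by conserved regulation of a
species (adding a new species `X (n+1)` and the reactions `X k → X (n+1)` and
`X (n+1) → X k`), for networks without catalytic reactions. -/
theorem siphons_conserved_regulation (n ν : ℕ) (α β : Matrix (Fin n) (Fin ν) ℕ)
    (hcat : ∀ i j, ¬(0 < α i j ∧ 0 < β i j))
    (k : Fin n)
    (αt βt : Matrix (Fin (n + 1)) (Fin (ν + 2)) ℕ)
    (hαold : ∀ (i : Fin n) (l : Fin ν), αt i.castSucc l.castSucc.castSucc = α i l)
    (hβold : ∀ (i : Fin n) (l : Fin ν), βt i.castSucc l.castSucc.castSucc = β i l)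
    (hαoldl : ∀ l : Fin ν, αt (Fin.last n) l.castSucc.castSucc = 0)
    (hβoldl : ∀ l : Fin ν, βt (Fin.last n) l.castSucc.castSucc = 0)
    (hαfwd : ∀ i : Fin (n + 1),
      αt i (Fin.last ν).castSucc = if i = k.castSucc then 1 else 0)
    (hβfwd : ∀ i : Fin (n + 1),
      βt i (Fin.last ν).castSucc = if i = Fin.last n then 1 else 0)
    (hαbwd : ∀ i : Fin (n + 1),
      αt i (Fin.last (ν + 1)) = if i = Fin.last n then 1 else 0)
    (hβbwd : ∀ i : Fin (n + 1),
      βt i (Fin.last (ν + 1)) = if i = k.castSucc then 1 else 0)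
    (hN : noCriticalSiphons α β) :
    noCriticalSiphons αt βt := by
  intro Pt hPt
  obtain ⟨hPtne, hPts⟩ := hPt
  have hlk : Fin.last n ∈ Pt → k.castSucc ∈ Pt := by
    intro hl
    obtain ⟨i', hi', hαi'⟩ := hPts (Fin.last ν).castSucc
      ⟨Fin.last n, hl, by rw [hβfwd]; simp⟩
    rw [hαfwd] at hαi'
    by_cases h : i' = k.castSucc
    · rwa [h] at hi'
    · simp [h] at hαi'
  have hkl : k.castSucc ∈ Pt → Fin.last n ∈ Pt := by
    intro hk
    obtain ⟨i', hi', hαi'⟩ := hPts (Fin.last (ν + 1))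
      ⟨k.castSucc, hk, by rw [hβbwd]; simp⟩
    rw [hαbwd] at hαi'
    by_cases h : i' = Fin.last n
    · rwa [h] at hi'
    · simp [h] at hαi'
  set P : Finset (Fin n) := Finset.univ.filter (fun i => i.castSucc ∈ Pt) with hP
  have hPmem : ∀ i : Fin n, i ∈ P ↔ i.castSucc ∈ Pt := by
    intro i; simp [hP]
  have hPsiphon : isSiphon α β P := by
    constructor
    · obtain ⟨i0, hi0⟩ := hPtne
      by_cases h : i0 = Fin.last n
      · exact ⟨k, (hPmem k).2 (hlk (h ▸ hi0))⟩
      · obtain ⟨j, hj⟩ := Fin.exists_castSucc_eq.2 h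
        exact ⟨j, (hPmem j).2 (hj ▸ hi0)⟩
    · rintro l ⟨i, hi, hβi⟩
      obtain ⟨i', hi', hαi'⟩ := hPts l.castSucc.castSucc
        ⟨i.castSucc, (hPmem i).1 hi, by rw [hβold]; exact hβi⟩
      by_cases h : i' = Fin.last n
      · rw [h, hαoldl] at hαi'; exact absurd hαi' (lt_irrefl 0)
      · obtain ⟨j, hj⟩ := Fin.exists_castSucc_eq.2 h
        refine ⟨j, (hPmem j).2 (hj ▸ hi'), ?_⟩
        rw [← hαold j l, hj]; exact hαi'
  obtain ⟨d, hd0, hdpos, hdcons, hdsupp⟩ := hN P hPsiphon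
  refine ⟨Fin.snoc d (d k), ?_, ?_, ?_, ?_⟩
  · intro h
    apply hd0
    funext i
    have := congrFun h i.castSucc
    simpa using this
  · intro i
    refine Fin.lastCases ?_ ?_ i
    · simpa using hdpos k
    · intro j; simpa using hdpos j
  · intro j
    refine Fin.lastCases ?_ (fun m => Fin.lastCases ?_ ?_ m) j
    · -- backward reaction column
      rw [Fin.sum_univ_castSucc]
      simp only [Fin.snoc_castSucc, Fin.snoc_last, gam, hαbwd, hβbwd,
        Nat.cast_ite, Nat.cast_one, Nat.cast_zero]
      have hne : ∀ i : Fin n, i.castSucc ≠ Fin.last n := fun i => (Fin.castSucc_lt_last i).ne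
      have h1 : ∀ x : Fin n, d x * ((if x.castSucc = k.castSucc then (1:ℝ) else 0) -
          (if x.castSucc = Fin.last n then (1:ℝ) else 0)) = if x = k then d k else 0 := by
        intro x
        rw [if_neg (hne x)]
        by_cases h : x = k <;> simp [h, Fin.castSucc_inj]
      rw [Finset.sum_congr rfl (fun x _ => h1 x)]
      rw [if_neg (Ne.symm (hne k))]
      simp
    · -- forward reaction column
      rw [Fin.sum_univ_castSucc]
      simp only [Fin.snoc_castSucc, Fin.snoc_last, gam, hαfwd, hβfwd,
        Nat.cast_ite, Nat.cast_one, Nat.cast_zero]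
      have hne : ∀ i : Fin n, i.castSucc ≠ Fin.last n := fun i => (Fin.castSucc_lt_last i).ne
      have h1 : ∀ x : Fin n, d x * ((if x.castSucc = Fin.last n then (1:ℝ) else 0) -
          (if x.castSucc = k.castSucc then (1:ℝ) else 0)) = if x = k then -d k else 0 := by
        intro x
        rw [if_neg (hne x)]
        by_cases h : x = k <;> simp [h, Fin.castSucc_inj]
      rw [Finset.sum_congr rfl (fun x _ => h1 x)]
      rw [if_neg (Ne.symm (hne k))]
      simp
    · -- old columns
      intro l
      rw [Fin.sum_univ_castSucc]
      simp only [Fin.snoc_castSucc, Fin.snoc_last, gam, hαold, hβold, hαoldl, hβoldl]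
      have := hdcons l
      simp only [gam] at this
      rw [this]
      simp
  · intro i
    refine Fin.lastCases ?_ ?_ i
    · intro h
      rw [Fin.snoc_last] at h
      exact hkl ((hPmem k).1 (hdsupp k h))
    · intro j h
      rw [Fin.snoc_castSucc] at h
      exact (hPmem j).1 (hdsupp j h)
end

section
/- Let a reaction network N be given by α, β ∈ ℕ^{n×ν} with Γ = β − α, and assume N has no catalytic reactions (for all i, j, not both α_{ij} > 0 and β_{ij} > 0). Fix a reaction j and let Ñ be obtained from N by adding an intermediate species to reaction j: Ñ has n+1 species and ν+1 reactions with α̃, β̃ ∈ ℕ^{(n+1)×(ν+1)} defined by: column j of α̃ is column j of α extended by 0 in row n+1, and column j of β̃ is the vector with 1 in row n+1 and 0 elsewhere; column ν+1 of α̃ is the vector with 1 in row n+1 and 0 elsewhere, and column ν+1 of β̃ is column j of β extended by 0 in row n+1; every other column of α̃ (resp. β̃) equals the corresponding column of α (resp. β) extended by 0 in row n+1; set Γ̃ = β̃ − α̃. If N has no critical siphons, then Ñ has no critical siphons. -/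
open Matrix Finset

/-- The absence of critical siphons is preserved by the addition of an
intermediate species to a reaction (for networks without catalytic reactions). -/
theorem siphons_intermediate (n ν : ℕ) (α β : Matrix (Fin n) (Fin ν) ℕ)
    (hcat : ∀ i j, ¬(0 < α i j ∧ 0 < β i j))
    (j : Fin ν)
    (αt βt : Matrix (Fin (n + 1)) (Fin (ν + 1)) ℕ)
    (hαj : ∀ i : Fin n, αt i.castSucc j.castSucc = α i j)
    (hαjl : αt (Fin.last n) j.castSucc = 0)
    (hβj : ∀ i : Fin n, βt i.castSucc j.castSucc = 0)
    (hβjl : βt (Fin.last n) j.castSucc = 1)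
    (hαnew : ∀ i : Fin n, αt i.castSucc (Fin.last ν) = 0)
    (hαnewl : αt (Fin.last n) (Fin.last ν) = 1)
    (hβnew : ∀ i : Fin n, βt i.castSucc (Fin.last ν) = β i j)
    (hβnewl : βt (Fin.last n) (Fin.last ν) = 0)
    (hother : ∀ (i : Fin n) (k : Fin ν), k ≠ j →
      αt i.castSucc k.castSucc = α i k ∧ βt i.castSucc k.castSucc = β i k)
    (hotherl : ∀ k : Fin ν, k ≠ j →
      αt (Fin.last n) k.castSucc = 0 ∧ βt (Fin.last n) k.castSucc = 0)
    (hN : noCriticalSiphons α β) :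
    noCriticalSiphons αt βt := by

  intro Pt hPt
  obtain ⟨hPne, hPsi⟩ := hPt
  classical
  set P : Finset (Fin n) := Finset.univ.filter (fun i => i.castSucc ∈ Pt) with hPdef
  have hmemP : ∀ i : Fin n, i ∈ P ↔ i.castSucc ∈ Pt := by
    intro i; simp [hPdef]
  -- any species in Pt with positive αt in column k.castSucc gives a species in P
  have hnotlast : ∀ k : Fin ν, ∀ i' ∈ Pt, 0 < αt i' k.castSucc → ∃ i'' ∈ P, 0 < α i'' k := by
    intro k i' hi' hpos
    induction i' using Fin.lastCases with
    | last =>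
      by_cases hk : k = j
      · subst hk; rw [hαjl] at hpos; exact absurd hpos (lt_irrefl 0)
      · rw [(hotherl k hk).1] at hpos; exact absurd hpos (lt_irrefl 0)
    | cast i'' =>
      refine ⟨i'', (hmemP i'').2 hi', ?_⟩
      by_cases hk : k = j
      · subst hk; rwa [hαj] at hpos
      · rwa [(hother i'' k hk).1] at hpos
  have hlast_in : Fin.last n ∈ Pt → ∃ i'' ∈ P, 0 < α i'' j := by
    intro h
    obtain ⟨i', hi', hpos⟩ := hPsi j.castSucc ⟨Fin.last n, h, by rw [hβjl]; exact one_pos⟩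
    exact hnotlast j i' hi' hpos
  have hsi : isSiphon α β P := by
    constructor
    · by_cases h : Fin.last n ∈ Pt
      · obtain ⟨i, hi, _⟩ := hlast_in h
        exact ⟨i, hi⟩
      · obtain ⟨x, hx⟩ := hPne
        induction x using Fin.lastCases with
        | last => exact absurd hx h
        | cast i => exact ⟨i, (hmemP i).2 hx⟩
    · rintro k ⟨i, hiP, hβ⟩
      by_cases hk : k = j
      · subst hk
        obtain ⟨i', hi', hpos⟩ := hPsi (Fin.last ν)
          ⟨i.castSucc, (hmemP i).1 hiP, by rw [hβnew]; exact hβ⟩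
        have hlast : Fin.last n ∈ Pt := by
          induction i' using Fin.lastCases with
          | last => exact hi'
          | cast i'' => rw [hαnew] at hpos; exact absurd hpos (lt_irrefl 0)
        exact hlast_in hlast
      · obtain ⟨i', hi', hpos⟩ := hPsi k.castSucc
          ⟨i.castSucc, (hmemP i).1 hiP, by rw [(hother i k hk).2]; exact hβ⟩
        exact hnotlast k i' hi' hpos
  obtain ⟨d, hd0, hdnn, hdcons, hdsupp⟩ := hN P hsi
  set c : ℝ := ∑ i, d i * (α i j : ℝ) with hc
  have hcnn : 0 ≤ c := Finset.sum_nonneg fun i _ => mul_nonneg (hdnn i) (Nat.cast_nonneg _)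
  -- from the conservation law at column j: ∑ d β = ∑ d α = c
  have hdj : ∑ i, d i * (β i j : ℝ) = c := by
    have h := hdcons j
    rw [hc]
    have : ∑ i, d i * gam α β i j
        = ∑ i, d i * (β i j : ℝ) - ∑ i, d i * (α i j : ℝ) := by
      rw [← Finset.sum_sub_distrib]
      refine Finset.sum_congr rfl fun i _ => by simp [gam, mul_sub]
    rw [this] at h
    linarith
  refine ⟨Fin.snoc d c, ?_, ?_, ?_, ?_⟩
  · intro h
    apply hd0
    funext i
    have := congrFun h i.castSucc
    simpa [Fin.snoc_castSucc] using this
  · intro i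
    induction i using Fin.lastCases with
    | last => simpa [Fin.snoc_last] using hcnn
    | cast i => simpa [Fin.snoc_castSucc] using hdnn i
  · intro k
    rw [Fin.sum_univ_castSucc]
    simp only [Fin.snoc_castSucc, Fin.snoc_last]
    induction k using Fin.lastCases with
    | last =>
      have h1 : ∀ i : Fin n, d i * gam αt βt i.castSucc (Fin.last ν)
          = d i * (β i j : ℝ) := by
        intro i; simp [gam, hβnew, hαnew]
      have h2 : gam αt βt (Fin.last n) (Fin.last ν) = -1 := by
        simp [gam, hβnewl, hαnewl]
      rw [Finset.sum_congr rfl fun i _ => h1 i, h2, hdj]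
      ring
    | cast k =>
      by_cases hk : k = j
      · subst hk
        have h1 : ∀ i : Fin n, d i * gam αt βt i.castSucc k.castSucc
            = -(d i * (α i k : ℝ)) := by
          intro i; simp [gam, hβj, hαj]
        have h2 : gam αt βt (Fin.last n) k.castSucc = 1 := by
          simp [gam, hβjl, hαjl]
        rw [Finset.sum_congr rfl fun i _ => h1 i, h2, Finset.sum_neg_distrib, ← hc]
        ring
      · have h1 : ∀ i : Fin n, d i * gam αt βt i.castSucc k.castSucc
            = d i * gam α β i k := by
          intro i; simp [gam, (hother i k hk).1, (hother i k hk).2]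
        have h2 : gam αt βt (Fin.last n) k.castSucc = 0 := by
          simp [gam, (hotherl k hk).1, (hotherl k hk).2]
        rw [Finset.sum_congr rfl fun i _ => h1 i, h2, hdcons k]
        ring
  · intro i hi
    induction i using Fin.lastCases with
    | cast i =>
      rw [Fin.snoc_castSucc] at hi
      exact (hmemP i).1 (hdsupp i hi)
    | last =>
      rw [Fin.snoc_last] at hi
      by_cases hlast : Fin.last n ∈ Pt
      · exact hlast
      · -- show c = 0, contradiction
        exfalso
        have hβ0 : ∀ i ∈ P, β i j = 0 := by
          intro i hiP
          by_contra hβ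
          obtain ⟨i', hi', hpos⟩ := hPsi (Fin.last ν)
            ⟨i.castSucc, (hmemP i).1 hiP, by rw [hβnew]; exact Nat.pos_of_ne_zero hβ⟩
          induction i' using Fin.lastCases with
          | last => exact hlast hi'
          | cast i'' => rw [hαnew] at hpos; exact absurd hpos (lt_irrefl 0)
        have : ∑ i, d i * (β i j : ℝ) = 0 := by
          refine Finset.sum_eq_zero fun i _ => ?_
          rcases lt_or_eq_of_le (hdnn i) with h | h
          · rw [hβ0 i (hdsupp i h)]; simp
          · rw [← h]; ring
        rw [hdj] at this
        exact absurd this (ne_of_gt hi)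
end

section
/- Let a reaction network N be given by α, β ∈ ℕ^{n×ν} with Γ = β − α, and assume N has no catalytic reactions (for all i, j, not both α_{ij} > 0 and β_{ij} > 0). Fix a species i and let Ñ be obtained from N by adding a dimer X_i⁺: Ñ has n+1 species and the same ν reactions, where rows 1,…,n of α̃ and β̃ equal those of α and β, row n+1 of α̃ equals row i of α, and row n+1 of β̃ equals row i of β; set Γ̃ = β̃ − α̃. If N has no critical siphons, then Ñ has no critical siphons. -/
open Matrix Finset

/-- The absence of critical siphons is preserved by adding a dimer species `X i⁺`
(for networks without catalytic reactions). -/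
theorem siphons_add_dimer (n ν : ℕ) (α β : Matrix (Fin n) (Fin ν) ℕ)
    (hcat : ∀ i j, ¬(0 < α i j ∧ 0 < β i j))
    (i0 : Fin n)
    (αt βt : Matrix (Fin (n + 1)) (Fin ν) ℕ)
    (hαold : ∀ (i : Fin n) (j : Fin ν), αt i.castSucc j = α i j)
    (hβold : ∀ (i : Fin n) (j : Fin ν), βt i.castSucc j = β i j)
    (hαnew : ∀ j : Fin ν, αt (Fin.last n) j = α i0 j)
    (hβnew : ∀ j : Fin ν, βt (Fin.last n) j = β i0 j)
    (hN : noCriticalSiphons α β) :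
    noCriticalSiphons αt βt := by
  intro Pt hPt
  obtain ⟨hPne, hPsi⟩ := hPt
  by_cases hlast : Fin.last n ∈ Pt
  · -- new species in siphon: use Q = insert i0 {i | castSucc i ∈ Pt}
    set Q : Finset (Fin n) := insert i0 (Finset.univ.filter fun i => i.castSucc ∈ Pt) with hQ
    have hQsi : isSiphon α β Q := by
      constructor
      · exact ⟨i0, Finset.mem_insert_self _ _⟩
      · intro j ⟨i, hiQ, hib⟩
        have hbt : ∃ k ∈ Pt, 0 < βt k j := by
          rcases Finset.mem_insert.mp hiQ with h | h
          · exact ⟨Fin.last n, hlast, by rw [hβnew]; rwa [h] at hib⟩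
          · exact ⟨i.castSucc, (Finset.mem_filter.mp h).2, by rwa [hβold]⟩
        obtain ⟨k, hkP, hka⟩ := hPsi j hbt
        rcases Fin.eq_castSucc_or_eq_last k with ⟨k', rfl⟩ | rfl
        · exact ⟨k', Finset.mem_insert.mpr (Or.inr (Finset.mem_filter.mpr ⟨Finset.mem_univ _, hkP⟩)),
            by rwa [hαold] at hka⟩
        · exact ⟨i0, Finset.mem_insert_self _ _, by rwa [hαnew] at hka⟩
    obtain ⟨d, hd0, hdnn, hdc, hds⟩ := hN Q hQsi
    refine ⟨Fin.lastCases (d i0) (fun i => if i = i0 then 0 else d i), ?_, ?_, ?_, ?_⟩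
    · obtain ⟨i, hi⟩ := Function.ne_iff.mp hd0
      by_cases h : i = i0
      · intro hc
        have := congrFun hc (Fin.last n)
        simp only [Fin.lastCases_last, Pi.zero_apply] at this
        exact hi (h ▸ this)
      · intro hc
        have := congrFun hc i.castSucc
        simp only [Fin.lastCases_castSucc, Pi.zero_apply, if_neg h] at this
        exact hi this
    · intro k
      refine Fin.lastCases ?_ ?_ k
      · simpa using hdnn i0
      · intro i
        simp only [Fin.lastCases_castSucc]
        split <;> [exact le_refl 0; exact hdnn i]
    · intro j
      rw [Fin.sum_univ_castSucc]
      simp only [Fin.lastCases_castSucc, Fin.lastCases_last]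
      have hgam : ∀ i : Fin n, gam αt βt i.castSucc j = gam α β i j := by
        intro i; simp [gam, hαold, hβold]
      have hgaml : gam αt βt (Fin.last n) j = gam α β i0 j := by
        simp [gam, hαnew, hβnew]
      rw [hgaml]
      have : ∀ i : Fin n, (if i = i0 then 0 else d i) * gam αt βt i.castSucc j
          = d i * gam α β i j - (if i = i0 then d i0 * gam α β i0 j else 0) := by
        intro i
        rw [hgam]
        by_cases h : i = i0 <;> simp [h]
      rw [Finset.sum_congr rfl (fun i _ => this i), Finset.sum_sub_distrib,
        Finset.sum_ite_eq' Finset.univ i0, if_pos (Finset.mem_univ _), hdc j]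
      ring
    · intro k
      refine Fin.lastCases ?_ ?_ k
      · intro _; exact hlast
      · intro i hi
        simp only [Fin.lastCases_castSucc] at hi
        by_cases h : i = i0
        · simp [h] at hi
        · rw [if_neg h] at hi
          have := hds i hi
          rcases Finset.mem_insert.mp this with h' | h'
          · exact absurd h' h
          · exact (Finset.mem_filter.mp h').2
  · -- new species not in siphon
    set Q : Finset (Fin n) := Finset.univ.filter fun i => i.castSucc ∈ Pt with hQ
    have hQsi : isSiphon α β Q := by
      constructor
      · obtain ⟨k, hk⟩ := hPne
        rcases Fin.eq_castSucc_or_eq_last k with ⟨k', rfl⟩ | rfl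
        · exact ⟨k', Finset.mem_filter.mpr ⟨Finset.mem_univ _, hk⟩⟩
        · exact absurd hk hlast
      · intro j ⟨i, hiQ, hib⟩
        have hbt : ∃ k ∈ Pt, 0 < βt k j :=
          ⟨i.castSucc, (Finset.mem_filter.mp hiQ).2, by rwa [hβold]⟩
        obtain ⟨k, hkP, hka⟩ := hPsi j hbt
        rcases Fin.eq_castSucc_or_eq_last k with ⟨k', rfl⟩ | rfl
        · exact ⟨k', Finset.mem_filter.mpr ⟨Finset.mem_univ _, hkP⟩, by rwa [hαold] at hka⟩
        · exact absurd hkP hlast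
    obtain ⟨d, hd0, hdnn, hdc, hds⟩ := hN Q hQsi
    refine ⟨Fin.lastCases 0 d, ?_, ?_, ?_, ?_⟩
    · obtain ⟨i, hi⟩ := Function.ne_iff.mp hd0
      intro hc
      have := congrFun hc i.castSucc
      simp only [Fin.lastCases_castSucc, Pi.zero_apply] at this
      exact hi this
    · intro k
      refine Fin.lastCases ?_ ?_ k
      · simp
      · intro i; simpa using hdnn i
    · intro j
      rw [Fin.sum_univ_castSucc]
      simp only [Fin.lastCases_castSucc, Fin.lastCases_last, zero_mul, add_zero]
      have hgam : ∀ i : Fin n, gam αt βt i.castSucc j = gam α β i j := by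
        intro i; simp [gam, hαold, hβold]
      rw [Finset.sum_congr rfl (fun i _ => by rw [hgam])]
      exact hdc j
    · intro k
      refine Fin.lastCases ?_ ?_ k
      · intro h; simp at h
      · intro i hi
        simp only [Fin.lastCases_castSucc] at hi
        exact (Finset.mem_filter.mp (hds i hi)).2
end

section
/- Let a reaction network N be given by α, β ∈ ℕ^{n×ν} with Γ = β − α, and assume N is linear: every reaction j is of one of the forms X_i → X_{i'} with i ≠ i' (column j of α is the standard basis vector e_i and column j of β is e_{i'}), ∅ → X_i (column j of α is zero and column j of β is e_i), or X_i → ∅ (column j of α is e_i and column j of β is zero). Assume further that N admits a strictly positive flux: there exists v ∈ ℝ^ν with v_j > 0 for all j and Γv = 0. Fix a species i and let Ñ be obtained from N by adding a catalyst X_i⁻: Ñ has n+1 species and the same ν reactions, where rows 1,…,n of α̃ and β̃ equal those of α and β, row n+1 of α̃ equals row i of β, and row n+1 of β̃ equals row i of α; set Γ̃ = β̃ − α̃. If N has no critical siphons, then Ñ has no critical siphons. -/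
open Matrix Finset

/-
Let `P` be a siphon of the extended network and write `X` for the catalyst `X_{i0}⁻`, whose row of
`Γ̃` is minus the row of `i0`.
* If `X ∉ P`, then `P` is a siphon of `N`; a conservation law of `N` supported in it, extended by
  zero on `X`, is one of `Ñ`.
* If `X ∈ P` and `i0 ∈ P`, then `e_{i0} + e_X` is a conservation law supported in `P`.
* If `X ∈ P` and `i0 ∉ P`, then `i0` is the reactant of no reaction: such a reaction produces `X`,
  so by the siphon property it consumes a species of `P`, and linearity leaves only `i0` itself or
  `X` (which would make `i0` both reactant and product). Then `Γ v = 0` with `v > 0` forces `i0` to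
  be produced by no reaction either, so the row of `X` vanishes and `e_X` is a conservation law.
-/

section

variable {n ν : ℕ}

lemma containsConsLaw_of_gam_add_eq_zero {α β : Matrix (Fin n) (Fin ν) ℕ} {P : Finset (Fin n)}
    {k l : Fin n} (hk : k ∈ P) (hl : l ∈ P) (hkl : ∀ j, gam α β k j + gam α β l j = 0) :
    containsConsLaw α β P := by
  have hsingle : ∀ m i : Fin n, (0 : ℝ) ≤ (Pi.single m 1 : Fin n → ℝ) i := fun m i => by
    rw [Pi.single_apply]; split_ifs <;> norm_num
  refine ⟨Pi.single k 1 + Pi.single l 1, fun h => ?_, fun i => add_nonneg (hsingle k i)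
    (hsingle l i), fun j => ?_, fun i hi => ?_⟩
  · have := congrFun h k
    simp only [Pi.add_apply, Pi.single_eq_same, Pi.zero_apply] at this
    linarith [hsingle l k]
  · simpa only [Pi.add_apply, add_mul, sum_add_distrib, Pi.single_apply, ite_mul, one_mul,
      zero_mul, sum_ite_eq', mem_univ, if_true] using hkl j
  · by_contra hiP
    have hik : i ≠ k := fun h => hiP (h ▸ hk)
    have hil : i ≠ l := fun h => hiP (h ▸ hl)
    simp [hik, hil] at hi

lemma beta_eq_zero_of_pos_flux {α β : Matrix (Fin n) (Fin ν) ℕ} {v : Fin ν → ℝ} {i : Fin n}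
    (hv : ∀ j, 0 < v j) (hΓv : ∑ j, gam α β i j * v j = 0) (hα : ∀ j, α i j = 0) (j : Fin ν) :
    β i j = 0 := by
  have hsum : ∑ j, (β i j : ℝ) * v j = 0 := by simpa [gam, hα] using hΓv
  have hnonneg : ∀ j ∈ univ, 0 ≤ (β i j : ℝ) * v j := fun j _ =>
    mul_nonneg (Nat.cast_nonneg _) (hv j).le
  have hj := (sum_eq_zero_iff_of_nonneg hnonneg).mp hsum j (mem_univ j)
  exact_mod_cast (mul_eq_zero.mp hj).resolve_right (hv j).ne'

lemma eq_of_pos_of_eq_ite {ι : Type*} [DecidableEq ι] {f : ι → ℕ} {a i : ι}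
    (hf : ∀ i, f i = if i = a then 1 else 0) (hi : 0 < f i) : i = a := by
  by_contra h
  simp [hf i, h] at hi

def IsLinearReaction (α β : Matrix (Fin n) (Fin ν) ℕ) (j : Fin ν) : Prop :=
  (∃ i i' : Fin n, i ≠ i' ∧
    (∀ i'', α i'' j = if i'' = i then 1 else 0) ∧
    (∀ i'', β i'' j = if i'' = i' then 1 else 0)) ∨
  ((∀ i'', α i'' j = 0) ∧
    ∃ i : Fin n, ∀ i'', β i'' j = if i'' = i then 1 else 0) ∨
  (∃ i : Fin n, (∀ i'', α i'' j = if i'' = i then 1 else 0) ∧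
    ∀ i'', β i'' j = 0)

namespace IsLinearReaction

variable {α β : Matrix (Fin n) (Fin ν) ℕ} {j : Fin ν}

lemma eq_of_pos_of_pos (h : IsLinearReaction α β j) {i i' : Fin n} (hi : 0 < α i j)
    (hi' : 0 < α i' j) : i = i' := by
  rcases h with ⟨a, -, -, hα, -⟩ | ⟨hα, -⟩ | ⟨a, hα, -⟩
  · exact (eq_of_pos_of_eq_ite hα hi).trans (eq_of_pos_of_eq_ite hα hi').symm
  · exact absurd (hα i) hi.ne'
  · exact (eq_of_pos_of_eq_ite hα hi).trans (eq_of_pos_of_eq_ite hα hi').symm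

lemma beta_eq_zero_of_pos (h : IsLinearReaction α β j) {i : Fin n} (hi : 0 < α i j) :
    β i j = 0 := by
  rcases h with ⟨a, b, hab, hα, hβ⟩ | ⟨hα, -⟩ | ⟨a, -, hβ⟩
  · rw [hβ i, if_neg]
    rintro rfl
    exact hab (eq_of_pos_of_eq_ite hα hi).symm
  · exact absurd (hα i) hi.ne'
  · exact hβ i

end IsLinearReaction

end

section CatalystExtension

variable {n ν : ℕ} {α β : Matrix (Fin n) (Fin ν) ℕ} {αt βt : Matrix (Fin (n + 1)) (Fin ν) ℕ}

lemma gam_castSucc (hα : ∀ i j, αt i.castSucc j = α i j) (hβ : ∀ i j, βt i.castSucc j = β i j)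
    (i : Fin n) (j : Fin ν) : gam αt βt i.castSucc j = gam α β i j := by
  simp [gam, hα, hβ]

lemma gam_last {i0 : Fin n} (hα : ∀ j, αt (Fin.last n) j = β i0 j)
    (hβ : ∀ j, βt (Fin.last n) j = α i0 j) (j : Fin ν) :
    gam αt βt (Fin.last n) j = -gam α β i0 j := by
  simp [gam, hα, hβ]

lemma isSiphon_filter_castSucc (hα : ∀ i j, αt i.castSucc j = α i j)
    (hβ : ∀ i j, βt i.castSucc j = β i j) {P : Finset (Fin (n + 1))} (hP : isSiphon αt βt P)
    (hlast : Fin.last n ∉ P) : isSiphon α β (univ.filter fun i => i.castSucc ∈ P) := by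
  have hcast : ∀ k ∈ P, ∃ i : Fin n, i.castSucc = k := fun k hk =>
    Fin.exists_castSucc_eq.mpr fun h => hlast (h ▸ hk)
  obtain ⟨⟨k, hk⟩, hPsi⟩ := hP
  refine ⟨?_, fun j ⟨i, hi, hβi⟩ => ?_⟩
  · obtain ⟨i, rfl⟩ := hcast k hk
    exact ⟨i, by simpa using hk⟩
  · obtain ⟨k, hk, hαk⟩ := hPsi j ⟨i.castSucc, by simpa using hi, by rwa [hβ]⟩
    obtain ⟨i', rfl⟩ := hcast k hk
    exact ⟨i', by simpa using hk, by rwa [← hα]⟩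

lemma containsConsLaw_of_castSucc (hα : ∀ i j, αt i.castSucc j = α i j)
    (hβ : ∀ i j, βt i.castSucc j = β i j) {Q : Finset (Fin n)} {P : Finset (Fin (n + 1))}
    (hQP : ∀ i ∈ Q, i.castSucc ∈ P) (hQ : containsConsLaw α β Q) : containsConsLaw αt βt P := by
  obtain ⟨d, hd0, hdnn, hdΓ, hdsupp⟩ := hQ
  refine ⟨Fin.snoc d 0, fun h => hd0 (funext fun i => by simpa using congrFun h i.castSucc),
    Fin.lastCases (by simp) (by simpa using hdnn), fun j => ?_,
    Fin.lastCases (by simp) (by simpa using fun i hi => hQP i (hdsupp i hi))⟩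
  simpa [Fin.sum_univ_castSucc, gam_castSucc hα hβ] using hdΓ j

lemma alpha_eq_zero_of_isSiphon {i0 : Fin n} (hlin : ∀ j, IsLinearReaction α β j)
    (hαold : ∀ i j, αt i.castSucc j = α i j) (hαnew : ∀ j, αt (Fin.last n) j = β i0 j)
    (hβnew : ∀ j, βt (Fin.last n) j = α i0 j) {P : Finset (Fin (n + 1))}
    (hP : isSiphon αt βt P) (hlast : Fin.last n ∈ P) (hi0 : i0.castSucc ∉ P) (j : Fin ν) :
    α i0 j = 0 := by
  by_contra hne
  have hpos : 0 < α i0 j := Nat.pos_of_ne_zero hne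
  obtain ⟨k, hk, hαk⟩ := hP.2 j ⟨Fin.last n, hlast, by rwa [hβnew]⟩
  induction k using Fin.lastCases with
  | last =>
    rw [hαnew] at hαk
    exact hαk.ne' ((hlin j).beta_eq_zero_of_pos hpos)
  | cast i =>
    rw [hαold] at hαk
    exact hi0 ((hlin j).eq_of_pos_of_pos hαk hpos ▸ hk)

end CatalystExtension

/-- For a linear network admitting a strictly positive flux, the absence of
critical siphons is preserved by adding a catalyst species `X i⁻`. -/
theorem siphons_add_catalyst_linear (n ν : ℕ) (α β : Matrix (Fin n) (Fin ν) ℕ)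
    (hlin : ∀ j : Fin ν,
      (∃ i i' : Fin n, i ≠ i' ∧
        (∀ i'', α i'' j = if i'' = i then 1 else 0) ∧
        (∀ i'', β i'' j = if i'' = i' then 1 else 0)) ∨
      ((∀ i'', α i'' j = 0) ∧
        ∃ i : Fin n, ∀ i'', β i'' j = if i'' = i then 1 else 0) ∨
      (∃ i : Fin n, (∀ i'', α i'' j = if i'' = i then 1 else 0) ∧
        ∀ i'', β i'' j = 0))
    (hflux : ∃ v : Fin ν → ℝ, (∀ j, 0 < v j) ∧
      ∀ i : Fin n, ∑ j : Fin ν, gam α β i j * v j = 0)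
    (i0 : Fin n)
    (αt βt : Matrix (Fin (n + 1)) (Fin ν) ℕ)
    (hαold : ∀ (i : Fin n) (j : Fin ν), αt i.castSucc j = α i j)
    (hβold : ∀ (i : Fin n) (j : Fin ν), βt i.castSucc j = β i j)
    (hαnew : ∀ j : Fin ν, αt (Fin.last n) j = β i0 j)
    (hβnew : ∀ j : Fin ν, βt (Fin.last n) j = α i0 j)
    (hN : noCriticalSiphons α β) :
    noCriticalSiphons αt βt := by
  obtain ⟨v, hv, hΓv⟩ := hflux
  intro P hP
  by_cases hlast : Fin.last n ∈ P
  · by_cases hi0 : i0.castSucc ∈ P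
    · refine containsConsLaw_of_gam_add_eq_zero hi0 hlast fun j => ?_
      rw [gam_castSucc hαold hβold, gam_last hαnew hβnew, add_neg_cancel]
    · have hα0 := alpha_eq_zero_of_isSiphon hlin hαold hαnew hβnew hP hlast hi0
      have hβ0 := beta_eq_zero_of_pos_flux hv (hΓv i0) hα0
      refine containsConsLaw_of_gam_add_eq_zero hlast hlast fun j => ?_
      rw [gam_last hαnew hβnew, gam, hα0, hβ0]
      simp
  · exact containsConsLaw_of_castSucc hαold hβold (fun i hi => by simpa using hi)
      (hN _ (isSiphon_filter_castSucc hαold hβold hP hlast))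
end

section
/- Let a reaction network N be given by α, β ∈ ℕ^{n×ν} with Γ = β − α. Assume: (i) Γ𝟙 = 0, where 𝟙 ∈ ℝ^ν is the all-ones vector, and every v ∈ ℝ^ν with Γv = 0 and v_j > 0 for all j satisfies v = c𝟙 for some c > 0 (i.e., 𝟙 is, up to positive scaling, the unique positive flux); and (ii) every species is a reactant of exactly one reaction: for each i ∈ {1,…,n} there is exactly one j with α_{ij} > 0. Fix a reaction j* and let Ñ be obtained from N by adding an intermediate species to reaction j*: Ñ has n+1 species and ν+1 reactions with α̃, β̃ ∈ ℕ^{(n+1)×(ν+1)} defined by: column j* of α̃ is column j* of α extended by 0 in row n+1, and column j* of β̃ is the vector with 1 in row n+1 and 0 elsewhere; column ν+1 of α̃ is the vector with 1 in row n+1 and 0 elsewhere, and column ν+1 of β̃ is column j* of β extended by 0 in row n+1; every other column of α̃ (resp. β̃) equals the corresponding column of α (resp. β) extended by 0 in row n+1; set Γ̃ = β̃ − α̃. Then Ñ satisfies the same two conditions: Γ̃𝟙 = 0 with 𝟙 ∈ ℝ^{ν+1}, every v ∈ ℝ^{ν+1} with Γ̃v = 0 and all entries positive is a positive multiple of 𝟙,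 and every one of the n+1 species of Ñ is a reactant of exactly one reaction of Ñ. -/
open Matrix Finset

/-- The graphical hypotheses for the existence of a Max-Min RLF — the all-ones
vector is (up to positive scaling) the unique positive flux, and every species is
a reactant of exactly one reaction — are preserved by the addition of an
intermediate species to a reaction. -/
theorem maxmin_hypotheses_intermediate (n ν : ℕ) (α β : Matrix (Fin n) (Fin ν) ℕ)
    (hflux1 : ∀ i : Fin n, ∑ j : Fin ν, gam α β i j = 0)
    (huniq : ∀ v : Fin ν → ℝ, (∀ j, 0 < v j) →
      (∀ i : Fin n, ∑ j : Fin ν, gam α β i j * v j = 0) →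
      ∃ c : ℝ, 0 < c ∧ ∀ j, v j = c)
    (hreact : ∀ i : Fin n, ∃! j : Fin ν, 0 < α i j)
    (jstar : Fin ν)
    (αt βt : Matrix (Fin (n + 1)) (Fin (ν + 1)) ℕ)
    (hαj : ∀ i : Fin n, αt i.castSucc jstar.castSucc = α i jstar)
    (hαjl : αt (Fin.last n) jstar.castSucc = 0)
    (hβj : ∀ i : Fin n, βt i.castSucc jstar.castSucc = 0)
    (hβjl : βt (Fin.last n) jstar.castSucc = 1)
    (hαnew : ∀ i : Fin n, αt i.castSucc (Fin.last ν) = 0)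
    (hαnewl : αt (Fin.last n) (Fin.last ν) = 1)
    (hβnew : ∀ i : Fin n, βt i.castSucc (Fin.last ν) = β i jstar)
    (hβnewl : βt (Fin.last n) (Fin.last ν) = 0)
    (hother : ∀ (i : Fin n) (k : Fin ν), k ≠ jstar →
      αt i.castSucc k.castSucc = α i k ∧ βt i.castSucc k.castSucc = β i k)
    (hotherl : ∀ k : Fin ν, k ≠ jstar →
      αt (Fin.last n) k.castSucc = 0 ∧ βt (Fin.last n) k.castSucc = 0) :
    (∀ i : Fin (n + 1), ∑ j : Fin (ν + 1), gam αt βt i j = 0) ∧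
    (∀ v : Fin (ν + 1) → ℝ, (∀ j, 0 < v j) →
      (∀ i : Fin (n + 1), ∑ j : Fin (ν + 1), gam αt βt i j * v j = 0) →
      ∃ c : ℝ, 0 < c ∧ ∀ j, v j = c) ∧
    (∀ i : Fin (n + 1), ∃! j : Fin (ν + 1), 0 < αt i j) := by
  have gcast : ∀ (i : Fin n) (k : Fin ν), k ≠ jstar →
      gam αt βt i.castSucc k.castSucc = gam α β i k := by
    intro i k hk
    simp [gam, (hother i k hk).1, (hother i k hk).2]
  have gj : ∀ i : Fin n, gam αt βt i.castSucc jstar.castSucc = -(α i jstar : ℝ) := by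
    intro i; simp [gam, hαj, hβj]
  have gnew : ∀ i : Fin n, gam αt βt i.castSucc (Fin.last ν) = (β i jstar : ℝ) := by
    intro i; simp [gam, hαnew, hβnew]
  have glj : gam αt βt (Fin.last n) jstar.castSucc = 1 := by simp [gam, hαjl, hβjl]
  have glnew : gam αt βt (Fin.last n) (Fin.last ν) = -1 := by simp [gam, hαnewl, hβnewl]
  have glcast : ∀ k : Fin ν, k ≠ jstar → gam αt βt (Fin.last n) k.castSucc = 0 := by
    intro k hk; simp [gam, (hotherl k hk).1, (hotherl k hk).2]
  have glast : ∀ k : Fin ν, gam αt βt (Fin.last n) k.castSucc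
      = if k = jstar then (1 : ℝ) else 0 := by
    intro k
    by_cases hk : k = jstar
    · subst hk; simp [glj]
    · simp [hk, glcast k hk]
  have key : ∀ (v : Fin (ν + 1) → ℝ), v (Fin.last ν) = v jstar.castSucc →
      ∀ i : Fin n, ∑ j : Fin (ν + 1), gam αt βt i.castSucc j * v j
        = ∑ k : Fin ν, gam α β i k * v k.castSucc := by
    intro v hv i
    rw [Fin.sum_univ_castSucc]
    have h1 : ∀ k : Fin ν, gam α β i k * v k.castSucc
        = gam αt βt i.castSucc k.castSucc * v k.castSucc
          + (if k = jstar then (β i jstar : ℝ) * v (Fin.last ν) else 0) := by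
      intro k
      by_cases hk : k = jstar
      · subst hk
        rw [gj, hv, if_pos rfl]
        simp [gam]
        ring
      · rw [gcast i k hk, if_neg hk, add_zero]
    rw [Finset.sum_congr rfl (fun k _ => h1 k), Finset.sum_add_distrib,
      Finset.sum_ite_eq' Finset.univ jstar (fun _ => (β i jstar : ℝ) * v (Fin.last ν))]
    simp [gnew i]
  refine ⟨?_, ?_, ?_⟩
  · -- all-ones is a flux
    intro i
    refine Fin.lastCases ?_ ?_ i
    · rw [Fin.sum_univ_castSucc, Finset.sum_congr rfl (fun k _ => glast k),
        Finset.sum_ite_eq' Finset.univ jstar (fun _ => (1 : ℝ)), glnew]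
      simp
    · intro i0
      have := key (fun _ => 1) rfl i0
      simpa [hflux1 i0] using this
  · -- uniqueness of the positive flux
    intro v hvpos hveq
    have hlast : ∑ j : Fin (ν + 1), gam αt βt (Fin.last n) j * v j = 0 := hveq (Fin.last n)
    rw [Fin.sum_univ_castSucc] at hlast
    have h2 : ∀ k : Fin ν, gam αt βt (Fin.last n) k.castSucc * v k.castSucc
        = if k = jstar then v jstar.castSucc else 0 := by
      intro k
      rw [glast k]
      by_cases hk : k = jstar
      · subst hk; simp
      · simp [hk]
    rw [Finset.sum_congr rfl (fun k _ => h2 k),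
      Finset.sum_ite_eq' Finset.univ jstar (fun _ => v jstar.castSucc), glnew] at hlast
    simp at hlast
    have hv : v (Fin.last ν) = v jstar.castSucc := by linarith
    have hw : ∀ i : Fin n, ∑ k : Fin ν, gam α β i k * v k.castSucc = 0 := by
      intro i
      rw [← key v hv i]
      exact hveq i.castSucc
    obtain ⟨c, hc, hcall⟩ := huniq (fun k => v k.castSucc) (fun k => hvpos _) hw
    refine ⟨c, hc, ?_⟩
    intro j
    refine Fin.lastCases ?_ ?_ j
    · rw [hv]; exact hcall jstar
    · intro j0; exact hcall j0
  · -- every species is a reactant of exactly one reaction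
    intro i
    refine Fin.lastCases ?_ ?_ i
    · refine ⟨Fin.last ν, by simp [hαnewl], ?_⟩
      intro j hj
      refine Fin.lastCases (fun _ => rfl) ?_ j hj
      intro k hk
      exfalso
      by_cases h : k = jstar
      · subst h; simp [hαjl] at hk
      · simp [(hotherl k h).1] at hk
    · intro i0
      have hαeq : ∀ k : Fin ν, αt i0.castSucc k.castSucc = α i0 k := by
        intro k
        by_cases hk : k = jstar
        · subst hk; exact hαj i0
        · exact (hother i0 k hk).1
      obtain ⟨j, hj, hjuniq⟩ := hreact i0
      refine ⟨j.castSucc, by show 0 < αt i0.castSucc j.castSucc; rw [hαeq]; exact hj, ?_⟩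
      intro j' hj'
      refine Fin.lastCases ?_ ?_ j' hj'
      · intro h; exfalso; simp [hαnew i0] at h
      · intro k hk
        rw [hαeq] at hk
        rw [hjuniq k hk]
end
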